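/- arXiv:2407.06854 — 4 statements merged into one kernel-verified Lean document; each statement's English description precedes it below -/
import Mathlib

section
/- Let n ≥ 1, 1 ≤ k ≤ n, let X_1,…,X_n be nonempty sets and X := X_1 × ⋯ × X_n, and let x = (x_1,…,x_n), y = (y_1,…,y_n) ∈ X. Define the discrete signed measure μ_k^n[x,y] := δ_x + Σ_{j=0}^{k−1} (−1)^{k−j} C(n−j−1, n−k) Σ_{F ⊆ {1,…,n}, |F| = j} δ_{z_F}, where z_F ∈ X has i-th coordinate x_i for i ∈ F and y_i for i ∉ F, and C denotes a binomial coefficient. Then μ_k^n[x,y] ∈ M_k(X); moreover, if the set L := {i : x_i ≠ y_i} has fewer than k elements, then μ_k^n[x,y] is the zero measure. -/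
open MeasureTheory

attribute [local instance] Classical.propDecidable

namespace IndepRBF

/-- A discrete signed measure built from a coefficient function supported in `s`. -/
noncomputable def dmOfFun {α : Type*} (s : Finset α) (c : α → ℝ) : α →₀ ℝ :=
  Finsupp.onFinset s (fun x => if x ∈ s then c x else 0)
    (fun x hx => by by_contra h; simp [h] at hx)

/-- Integral of a function against a discrete signed measure. -/
noncomputable def dmInt {α : Type*} (μ : α →₀ ℝ) (f : α → ℝ) : ℝ :=
  ∑ x ∈ μ.support, μ x * f x

/-- Measure of a set under a discrete signed measure. -/
noncomputable def dmMeas {α : Type*} (μ : α →₀ ℝ) (A : Set α) : ℝ :=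
  ∑ x ∈ μ.support, if x ∈ A then μ x else 0

/-- Total mass of a discrete signed measure. -/
noncomputable def dmTotal {α : Type*} (μ : α →₀ ℝ) : ℝ :=
  ∑ x ∈ μ.support, μ x

/-- A discrete probability measure. -/
def IsDiscProb {α : Type*} (P : α →₀ ℝ) : Prop :=
  (∀ x, 0 ≤ P x) ∧ dmTotal P = 1

/-- Membership in `M_k(X)`: the measure of every product set with at least `n-k+1` full
factors vanishes. -/
def memMk {n : ℕ} {X : Fin n → Type*} (k : ℕ) (μ : (∀ i, X i) →₀ ℝ) : Prop :=
  ∀ A : ∀ i, Set (X i),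
    n - k + 1 ≤ (Finset.univ.filter fun i => A i = (Set.univ : Set (X i))).card →
    dmMeas μ {x | ∀ i, x i ∈ A i} = 0

/-- Product of discrete signed measures. -/
noncomputable def dmPi {n : ℕ} {X : Fin n → Type*} (μ : ∀ i, X i →₀ ℝ) :
    (∀ i, X i) →₀ ℝ :=
  dmOfFun (Fintype.piFinset fun i => (μ i).support) (fun x => ∏ i, μ i (x i))

/-- Coefficient (at the `F`-coordinates of `x`) of the marginal of `P` on the block `F`. -/
noncomputable def margCoef {n : ℕ} {X : Fin n → Type*} (P : (∀ i, X i) →₀ ℝ)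
    (F : Finset (Fin n)) (x : ∀ i, X i) : ℝ :=
  ∑ y ∈ P.support, if ∀ i ∈ F, y i = x i then P y else 0

/-- A finite box containing the support of any product of marginals of `P`. -/
noncomputable def suppBox {n : ℕ} {X : Fin n → Type*} (P : (∀ i, X i) →₀ ℝ) :
    Finset (∀ i, X i) :=
  Fintype.piFinset fun i => P.support.image fun y => y i

/-- The one-dimensional marginal of `P` on coordinate `i`. -/
noncomputable def marg1 {n : ℕ} {X : Fin n → Type*} (P : (∀ i, X i) →₀ ℝ) (i : Fin n) :
    X i →₀ ℝ :=
  dmOfFun (P.support.image fun y => y i)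
    (fun a => ∑ y ∈ P.support, if y i = a then P y else 0)

/-- The product of the one-dimensional marginals `P_1 × ⋯ × P_n`. -/
noncomputable def prodMarg1 {n : ℕ} {X : Fin n → Type*} (P : (∀ i, X i) →₀ ℝ) :
    (∀ i, X i) →₀ ℝ :=
  dmPi fun i => marg1 P i

/-- The product measure `P_F × Q_{F^c}`, arranged on the coordinates of the product space. -/
noncomputable def pairTerm {n : ℕ} {X : Fin n → Type*} (P Q : (∀ i, X i) →₀ ℝ)
    (F : Finset (Fin n)) : (∀ i, X i) →₀ ℝ :=
  dmOfFun (Fintype.piFinset fun i =>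
      (P.support.image fun y => y i) ∪ (Q.support.image fun y => y i))
    (fun x => margCoef P F x * margCoef Q Fᶜ x)

/-- Generalized Lancaster interaction `Λ_k^n[P,Q]`. -/
noncomputable def genLanc {n : ℕ} {X : Fin n → Type*} (k : ℕ) (P Q : (∀ i, X i) →₀ ℝ) :
    (∀ i, X i) →₀ ℝ :=
  P + ∑ j ∈ Finset.range k,
    ((-1 : ℝ) ^ (k - j) * ((n - j - 1).choose (n - k) : ℝ)) •
      ∑ F ∈ Finset.powersetCard j (Finset.univ : Finset (Fin n)), pairTerm P Q F

/-- The measure `P_F × ∏_{j ∈ F^c} P_j` arranged on the coordinates of the product space. -/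
noncomputable def lancTermD {n : ℕ} {X : Fin n → Type*} (P : (∀ i, X i) →₀ ℝ)
    (F : Finset (Fin n)) : (∀ i, X i) →₀ ℝ :=
  dmOfFun (suppBox P) (fun x => margCoef P F x * ∏ j ∈ Fᶜ, margCoef P {j} x)

/-- Generalized Lancaster interaction `Λ_k^n[P] = P + Σ_j (−1)^{k−j} C(n−j−1,n−k)
Σ_{|F|=j} P_F × ∏_{i∈F^c} P_i`. -/
noncomputable def genLancD {n : ℕ} {X : Fin n → Type*} (k : ℕ) (P : (∀ i, X i) →₀ ℝ) :
    (∀ i, X i) →₀ ℝ :=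
  P + ∑ j ∈ Finset.range k,
    ((-1 : ℝ) ^ (k - j) * ((n - j - 1).choose (n - k) : ℝ)) •
      ∑ F ∈ Finset.powersetCard j (Finset.univ : Finset (Fin n)), lancTermD P F

/-- Lancaster interaction `Λ[P] = Σ_F (−1)^{n−|F|} P_F × ∏_{j∈F^c} P_j`. -/
noncomputable def lancaster {n : ℕ} {X : Fin n → Type*} (P : (∀ i, X i) →₀ ℝ) :
    (∀ i, X i) →₀ ℝ :=
  ∑ F ∈ (Finset.univ : Finset (Fin n)).powerset,
    ((-1 : ℝ) ^ (n - F.card)) • lancTermD P F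

/-- `π` is a partition of `{1,…,n}`. -/
def IsPartition {n : ℕ} (π : Finset (Finset (Fin n))) : Prop :=
  (∀ B ∈ π, B.Nonempty) ∧ (∀ B ∈ π, ∀ B' ∈ π, B ≠ B' → Disjoint B B') ∧
    ∀ i : Fin n, ∃ B ∈ π, i ∈ B

/-- The product of the marginals of `P` on the blocks of `π`, arranged on the coordinates of
the product space. -/
noncomputable def blockProd {n : ℕ} {X : Fin n → Type*} (P : (∀ i, X i) →₀ ℝ)
    (π : Finset (Finset (Fin n))) : (∀ i, X i) →₀ ℝ :=
  dmOfFun (suppBox P) (fun x => ∏ B ∈ π, margCoef P B x)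

/-- Streitberg interaction `Σ[P]`. -/
noncomputable def streitberg {n : ℕ} {X : Fin n → Type*} (P : (∀ i, X i) →₀ ℝ) :
    (∀ i, X i) →₀ ℝ :=
  ∑ π ∈ Finset.univ.filter (fun π : Finset (Finset (Fin n)) => IsPartition π),
    ((-1 : ℝ) ^ (π.card - 1) * ((π.card - 1).factorial : ℝ)) • blockProd P π

/-- The vector of squared distances `(‖u_1−v_1‖²,…,‖u_n−v_n‖²)`. -/
noncomputable def sqDistVec {n d : ℕ} (u v : Fin n → EuclideanSpace ℝ (Fin d)) :
    Fin n → ℝ :=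
  fun i => ‖u i - v i‖ ^ 2

/-- Double integral `∬ g(‖u_1−v_1‖²,…,‖u_n−v_n‖²) dμ(u) dμ(v)`. -/
noncomputable def dblInt {n d : ℕ} (μ : (Fin n → EuclideanSpace ℝ (Fin d)) →₀ ℝ)
    (g : (Fin n → ℝ) → ℝ) : ℝ :=
  dmInt μ fun u => dmInt μ fun v => g (sqDistVec u v)

/-- `g` is positive definite independent of order `k` in all Euclidean spaces. -/
def PDI (n k : ℕ) (g : (Fin n → ℝ) → ℝ) : Prop :=
  ∀ d : ℕ, ∀ μ : (Fin n → EuclideanSpace ℝ (Fin d)) →₀ ℝ,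
    memMk k μ → 0 ≤ (-1 : ℝ) ^ k * dblInt μ g

/-- `g` is strictly positive definite independent of order `k` in all Euclidean spaces. -/
def SPDI (n k : ℕ) (g : (Fin n → ℝ) → ℝ) : Prop :=
  PDI n k g ∧ ∀ d : ℕ, ∀ μ : (Fin n → EuclideanSpace ℝ (Fin d)) →₀ ℝ,
    memMk k μ → dblInt μ g = 0 → μ = 0

/-- The closed nonnegative orthant `[0,∞)^n`. -/
def Qset (n : ℕ) : Set (Fin n → ℝ) := {t | ∀ i, 0 ≤ t i}

/-- The open positive orthant `(0,∞)^n`. -/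
def posOrth (n : ℕ) : Set (Fin n → ℝ) := {t | ∀ i, 0 < t i}

/-- The number of strictly positive coordinates of `t`. -/
noncomputable def posCount {n : ℕ} (t : Fin n → ℝ) : ℕ :=
  (Finset.univ.filter fun i => 0 < t i).card

/-- Partial derivative in the `i`-th coordinate. -/
noncomputable def pd {n : ℕ} (i : Fin n) (h : (Fin n → ℝ) → ℝ) : (Fin n → ℝ) → ℝ :=
  fun t => deriv (fun s => h (Function.update t i s)) (t i)

/-- Iterated partial derivative `∂^α`. -/
noncomputable def pdMulti {n : ℕ} (α : Fin n → ℕ) (h : (Fin n → ℝ) → ℝ) :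
    (Fin n → ℝ) → ℝ :=
  (List.finRange n).foldr (fun i k => (pd i)^[α i] k) h

/-- `h` is completely monotone in `n` variables on `(0,∞)^n`. -/
def CompMonoOn (n : ℕ) (h : (Fin n → ℝ) → ℝ) : Prop :=
  ContDiffOn ℝ (⊤ : ℕ∞) h (posOrth n) ∧
    ∀ α : Fin n → ℕ, ∀ t ∈ posOrth n,
      0 ≤ (-1 : ℝ) ^ (∑ i, α i) * pdMulti α h t

/-- `g` is a Bernstein function of order `k` in `(0,∞)^n`. -/
def BernsteinOrder (n k : ℕ) (g : (Fin n → ℝ) → ℝ) : Prop :=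
  ContDiffOn ℝ (⊤ : ℕ∞) g (posOrth n) ∧
    ∀ F : Finset (Fin n), F.card = k →
      CompMonoOn n (pdMulti (fun i => if i ∈ F then 1 else 0) g)

/-- Elementary symmetric polynomial `p_k^n`. -/
noncomputable def esymm {n : ℕ} (k : ℕ) (r : Fin n → ℝ) : ℝ :=
  ∑ F ∈ Finset.powersetCard k (Finset.univ : Finset (Fin n)), ∏ i ∈ F, r i

/-- `H_k^n(r) = p_n^n(r) + Σ_{j<k} (−1)^{k−j} C(n−j−1,n−k) p_j^n(r)`. -/
noncomputable def Hkn {n : ℕ} (k : ℕ) (r : Fin n → ℝ) : ℝ :=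
  esymm n r + ∑ j ∈ Finset.range k,
    (-1 : ℝ) ^ (k - j) * ((n - j - 1).choose (n - k) : ℝ) * esymm j r

/-- `E_k^n(s) = H_k^n(e^{−s_1},…,e^{−s_n})`. -/
noncomputable def Ekn {n : ℕ} (k : ℕ) (s : Fin n → ℝ) : ℝ :=
  Hkn k fun i => Real.exp (-(s i))

/-- `φ(r,t) = (1−e^{−rt})(1+r)/r` for `r > 0`, and `φ(0,t) = t`. -/
noncomputable def phi (r t : ℝ) : ℝ :=
  if r = 0 then t else (1 - Real.exp (-(r * t))) * (1 + r) / r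

/-- The vector `t_F ∈ [0,∞)^k` of the coordinates of `t` indexed by `F` (in increasing
order of indices); junk values if `F.card ≠ k`. -/
noncomputable def restrF {n : ℕ} (k : ℕ) (F : Finset (Fin n)) (t : Fin n → ℝ) :
    Fin k → ℝ :=
  fun j => ((F.sort (· ≤ ·)).map t).getD j.val 0

/-- The integral representation of Bernstein functions of order `n` in `n` variables. -/
def RepN (n : ℕ) (g : (Fin n → ℝ) → ℝ) (η : Measure (Fin n → ℝ)) : Prop :=
  IsFiniteMeasure η ∧ η {r | ¬ ∀ i, 0 ≤ r i} = 0 ∧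
    ∀ t ∈ Qset n, g t = ∫ r, ∏ i, phi (r i) (t i) ∂η

/-- The integral representation of Bernstein functions of order `k` in `n` variables. -/
def RepK (n k : ℕ) (g : (Fin n → ℝ) → ℝ)
    (ψ : Finset (Fin n) → (Fin k → ℝ) → ℝ) (η : Measure (Fin n → ℝ)) : Prop :=
  (∀ F : Finset (Fin n), F.card = k →
      ContinuousOn (ψ F) (Qset k) ∧ BernsteinOrder k k (ψ F) ∧
        ∀ u ∈ Qset k, posCount u < k → ψ F u = 0) ∧
  IsFiniteMeasure η ∧
  η {r | ¬ ((∀ i, 0 ≤ r i) ∧ k < posCount r)} = 0 ∧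
  ∀ t ∈ Qset n,
    g t = (∑ F ∈ Finset.powersetCard k (Finset.univ : Finset (Fin n)),
        ψ F (restrF k F t)) +
      ∫ r, (-1 : ℝ) ^ k * Ekn k (fun i => r i * t i) *
        esymm k (fun i => 1 + r i) / esymm k r ∂η

/-- The measure `μ_k^n[x,y]`. -/
noncomputable def muKN {n : ℕ} {X : Fin n → Type*} (k : ℕ) (x y : ∀ i, X i) :
    (∀ i, X i) →₀ ℝ :=
  Finsupp.single x 1 + ∑ j ∈ Finset.range k,
    ((-1 : ℝ) ^ (k - j) * ((n - j - 1).choose (n - k) : ℝ)) •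
      ∑ F ∈ Finset.powersetCard j (Finset.univ : Finset (Fin n)),
        Finsupp.single (fun i => if i ∈ F then x i else y i) (1 : ℝ)

noncomputable def Salt (N K m : ℕ) : ℝ :=
  ∑ i ∈ Finset.range (N - K + 1), (-1 : ℝ) ^ i * (m.choose i : ℝ) * ((N - i).choose K : ℝ)

lemma Salt_rec (N K m : ℕ) (h : K < N) :
    Salt N K (m + 1) = Salt N K m - Salt (N - 1) K m := by
  have expand : ∀ i, ((m+1).choose i : ℝ)
      = (m.choose i : ℝ) + (if i = 0 then 0 else (m.choose (i-1) : ℝ)) := by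
    intro i
    cases i with
    | zero => simp
    | succ i => rw [Nat.choose_succ_succ]; push_cast; simp [add_comm]
  have e1 : Salt N K (m+1) = Salt N K m + ∑ i ∈ Finset.range (N - K + 1),
      ((-1:ℝ)^i * (if i = 0 then 0 else (m.choose (i-1) : ℝ))) * ((N - i).choose K : ℝ) := by
    unfold Salt
    rw [← Finset.sum_add_distrib]
    refine Finset.sum_congr rfl fun i _ => ?_
    rw [expand]
    ring
  have e2 : ∑ i ∈ Finset.range (N - K + 1),
      ((-1:ℝ)^i * (if i = 0 then 0 else (m.choose (i-1) : ℝ))) * ((N - i).choose K : ℝ)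
      = - Salt (N - 1) K m := by
    rw [Finset.sum_range_succ']
    have h0 : ((-1:ℝ)^(0:ℕ) * (if (0:ℕ) = 0 then 0 else (m.choose (0-1) : ℝ)))
        * ((N - 0).choose K : ℝ) = 0 := by simp
    rw [h0, add_zero, show N - K = (N - 1) - K + 1 from by omega, Salt, ← Finset.sum_neg_distrib]
    refine Finset.sum_congr rfl fun i _ => ?_
    rw [if_neg (Nat.succ_ne_zero i), show N - (i + 1) = N - 1 - i from by omega,
      show i + 1 - 1 = i from rfl]
    ring
  rw [e1, e2]
  ring

lemma Salt_closed : ∀ m N K : ℕ, K ≤ N → m ≤ N →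
    Salt N K m = (((N - m).choose (N - K) : ℕ) : ℝ) := by
  intro m
  induction m with
  | zero =>
    intro N K hKN _
    unfold Salt
    rw [Finset.sum_eq_single 0]
    · simp [Nat.choose_symm hKN]
    · intro i _ hi; simp [Nat.choose_eq_zero_of_lt (Nat.pos_of_ne_zero hi)]
    · simp
  | succ m ih =>
    intro N K hKN hm
    rcases eq_or_lt_of_le hKN with h | h
    · subst h
      unfold Salt
      simp [Nat.choose_zero_right]
    · rw [Salt_rec N K m h, ih N K hKN (by omega), ih (N-1) K (by omega) (by omega)]
      have e1 : N - m = (N - (m+1)) + 1 := by omega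
      have e2 : N - K = (N - K - 1) + 1 := by omega
      have e3 : N - 1 - m = N - (m+1) := by omega
      have e4 : N - 1 - K = N - K - 1 := by omega
      rw [e3, e4, e1, e2, Nat.choose_succ_succ]
      push_cast
      ring

lemma Salt_top : ∀ N K : ℕ, K ≤ N → Salt N K (N + 1) = (-1 : ℝ) ^ (N - K) := by
  intro N
  induction N with
  | zero => intro K hK; interval_cases K; unfold Salt; simp
  | succ N ih =>
    intro K hK
    rcases eq_or_lt_of_le hK with h | h
    · subst h; unfold Salt; simp
    · have hKN : K ≤ N := by omega
      rw [Salt_rec (N+1) K (N+1) h]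
      simp only [Nat.add_sub_cancel]
      rw [Salt_closed (N+1) (N+1) K (by omega) le_rfl, ih K hKN]
      rw [Nat.sub_self, Nat.choose_eq_zero_of_lt (by omega)]
      rw [show N + 1 - K = (N - K) + 1 from by omega]
      push_cast
      ring

lemma key (n k a m : ℕ) (ha : a < k) (hkn : k ≤ n) (hm1 : n - k + 1 ≤ m) (hm2 : m ≤ n - a) :
    (if m = n - a then (1:ℝ) else 0)
      + ∑ j ∈ Finset.range k, (-1 : ℝ) ^ (k - j) * ((n - j - 1).choose (n - k) : ℝ) *
          (if a ≤ j then (m.choose (j - a) : ℝ) else 0) = 0 := by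
  have hsum : ∑ j ∈ Finset.range k, (-1 : ℝ) ^ (k - j) * ((n - j - 1).choose (n - k) : ℝ) *
          (if a ≤ j then (m.choose (j - a) : ℝ) else 0)
      = (-1:ℝ)^(k - a) * Salt (n - a - 1) (n - k) m := by
    rw [Finset.range_eq_Ico, ← Finset.sum_Ico_consecutive _ (Nat.zero_le a) (le_of_lt ha)]
    have h0 : ∑ j ∈ Finset.Ico 0 a, (-1 : ℝ) ^ (k - j) * ((n - j - 1).choose (n - k) : ℝ) *
          (if a ≤ j then (m.choose (j - a) : ℝ) else 0) = 0 := by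
      apply Finset.sum_eq_zero
      intro j hj
      rw [Finset.mem_Ico] at hj
      rw [if_neg (by omega), mul_zero]
    rw [h0, zero_add, Finset.sum_Ico_eq_sum_range]
    rw [Salt, show n - a - 1 - (n - k) + 1 = k - a from by omega, Finset.mul_sum]
    refine Finset.sum_congr rfl fun i hi => ?_
    rw [Finset.mem_range] at hi
    rw [if_pos (by omega)]
    have hp : (-1:ℝ) ^ (k - (a + i)) = (-1:ℝ)^(k - a) * (-1:ℝ)^i := by
      rw [← pow_add, neg_one_pow_eq_pow_mod_two, neg_one_pow_eq_pow_mod_two (n := k - a + i)]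
      congr 1
      omega
    rw [hp, show a + i - a = i from by omega, show n - (a + i) - 1 = n - a - 1 - i from by omega]
    ring
  rw [hsum]
  by_cases hm : m = n - a
  · have hS : Salt (n - a - 1) (n - k) m = (-1:ℝ) ^ ((n - a - 1) - (n - k)) := by
      rw [hm, show n - a = (n - a - 1) + 1 from by omega]
      exact Salt_top (n - a - 1) (n - k) (by omega)
    rw [if_pos hm, hS, ← pow_add,
      show k - a + (n - a - 1 - (n - k)) = 2*(k-a) - 1 from by omega]
    have hodd : Odd (2*(k-a) - 1) := ⟨k - a - 1, by omega⟩
    rw [hodd.neg_one_pow]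
    ring
  · rw [if_neg hm, Salt_closed m (n - a - 1) (n - k) (by omega) (by omega),
      Nat.choose_eq_zero_of_lt (by omega)]
    simp

lemma card_between {n : ℕ} (B P : Finset (Fin n)) (hBP : B ⊆ P) (j : ℕ) :
    ((Finset.powersetCard j (Finset.univ : Finset (Fin n))).filter
        (fun F => B ⊆ F ∧ F ⊆ P)).card
      = if B.card ≤ j then (P.card - B.card).choose (j - B.card) else 0 := by
  split_ifs with hle
  · rw [← Finset.card_sdiff_of_subset hBP, ← Finset.card_powersetCard]
    apply Finset.card_bij' (fun F _ => F \ B) (fun G _ => G ∪ B)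
    · intro F hF
      simp only [Finset.mem_filter, Finset.mem_powersetCard] at hF
      rw [Finset.mem_powersetCard]
      refine ⟨fun i hi => ?_, ?_⟩
      · rw [Finset.mem_sdiff] at hi ⊢
        exact ⟨hF.2.2 hi.1, hi.2⟩
      · rw [Finset.card_sdiff_of_subset hF.2.1, hF.1.2]
    · intro G hG
      rw [Finset.mem_powersetCard] at hG
      simp only [Finset.mem_filter, Finset.mem_powersetCard]
      have hdisj : Disjoint G B := by
        refine Finset.disjoint_left.mpr fun i hi => ?_
        have := hG.1 hi
        rw [Finset.mem_sdiff] at this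
        exact this.2
      refine ⟨⟨Finset.subset_univ _, ?_⟩, Finset.subset_union_right, Finset.union_subset
        (fun i hi => (Finset.mem_sdiff.mp (hG.1 hi)).1) hBP⟩
      rw [Finset.card_union_of_disjoint hdisj, hG.2]
      omega
    · intro F hF
      simp only [Finset.mem_filter] at hF
      exact Finset.sdiff_union_of_subset hF.2.1
    · intro G hG
      rw [Finset.mem_powersetCard] at hG
      apply Finset.union_sdiff_cancel_right
      refine Finset.disjoint_left.mpr fun i hi => ?_
      exact (Finset.mem_sdiff.mp (hG.1 hi)).2
  · rw [Finset.card_eq_zero, Finset.filter_eq_empty_iff]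
    intro F hF
    rw [Finset.mem_powersetCard] at hF
    rintro ⟨h1, -⟩
    exact hle (hF.2 ▸ Finset.card_le_card h1)

lemma eval_zero {n : ℕ} (k : ℕ) (hk : 1 ≤ k) (hkn : k ≤ n) (P Q : Finset (Fin n))
    (hT : Qᶜ ⊆ P → n - k + 1 ≤ (P ∩ Q).card) :
    (if P = Finset.univ then (1:ℝ) else 0) + ∑ j ∈ Finset.range k,
      (-1:ℝ)^(k-j) * ((n-j-1).choose (n-k) : ℝ) *
        (((Finset.powersetCard j Finset.univ).filter (fun F => Qᶜ ⊆ F ∧ F ⊆ P)).card : ℝ)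
      = 0 := by
  by_cases hBP : Qᶜ ⊆ P
  · have hQc : (Qᶜ : Finset (Fin n)).card = n - Q.card := by
      rw [Finset.card_compl, Fintype.card_fin]
    have hQn : Q.card ≤ n := by
      simpa using Finset.card_le_univ Q
    have hPn : P.card ≤ n := by
      simpa using Finset.card_le_univ P
    have hap : (Qᶜ : Finset (Fin n)).card ≤ P.card := Finset.card_le_card hBP
    have hPQQ : (P ∩ Q).card ≤ Q.card := Finset.card_le_card Finset.inter_subset_right
    have hcard := hT hBP
    have hpge : (P ∩ Q).card + (Qᶜ : Finset (Fin n)).card ≤ P.card := by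
      have hsub : (P ∩ Q) ∪ Qᶜ ⊆ P :=
        Finset.union_subset Finset.inter_subset_left hBP
      have hdisj : Disjoint (P ∩ Q) (Qᶜ : Finset (Fin n)) :=
        (disjoint_compl_right).mono_left Finset.inter_subset_right
      have := Finset.card_le_card hsub
      rwa [Finset.card_union_of_disjoint hdisj] at this
    set a := (Qᶜ : Finset (Fin n)).card with ha_def
    have ha : a < k := by omega
    have hiff : (P = Finset.univ) ↔ (P.card - a = n - a) := by
      rw [← Finset.card_eq_iff_eq_univ, Fintype.card_fin]
      omega
    rw [if_congr hiff rfl rfl]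
    have h2 : ∀ j ∈ Finset.range k,
        (-1:ℝ)^(k-j) * ((n-j-1).choose (n-k) : ℝ) *
          (((Finset.powersetCard j Finset.univ).filter (fun F => Qᶜ ⊆ F ∧ F ⊆ P)).card : ℝ)
        = (-1:ℝ)^(k-j) * ((n-j-1).choose (n-k) : ℝ) *
          (if a ≤ j then ((P.card - a).choose (j - a) : ℝ) else 0) := by
      intro j _
      rw [card_between Qᶜ P hBP j]
      split_ifs <;> simp [ha_def]
    rw [Finset.sum_congr rfl h2]
    exact key n k a (P.card - a) ha hkn (by omega) (by omega)
  · have hP : P ≠ Finset.univ := fun h => hBP (h ▸ Finset.subset_univ _)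
    have hempty : ∀ j, ((Finset.powersetCard j (Finset.univ : Finset (Fin n))).filter
        (fun F => Qᶜ ⊆ F ∧ F ⊆ P)) = ∅ := by
      intro j
      rw [Finset.filter_eq_empty_iff]
      rintro F - ⟨h1, h2⟩
      exact hBP (h1.trans h2)
    simp [hempty, hP]

/-- Indicator function of a set, valued in `ℝ`. -/
noncomputable def indFun {α : Type*} (A : Set α) : α → ℝ :=
  fun z => if z ∈ A then 1 else 0

lemma dmMeas_eq_lin {α : Type*} (μ : α →₀ ℝ) (A : Set α) :
    dmMeas μ A = Finsupp.linearCombination ℝ (indFun A) μ := by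
  rw [Finsupp.linearCombination_apply, Finsupp.sum]
  refine Finset.sum_congr rfl fun z _ => ?_
  by_cases h : z ∈ A <;> simp [h, indFun]

lemma apply_eq_lin {α : Type*} (μ : α →₀ ℝ) (w : α) :
    μ w = Finsupp.linearCombination ℝ (indFun {w}) μ := by
  rw [Finsupp.linearCombination_apply, Finsupp.sum, Finset.sum_eq_single w]
  · by_cases h : w ∈ μ.support
    · simp [indFun]
    · rw [Finsupp.notMem_support_iff.mp h]; simp [indFun]
  · intro z _ hz
    simp [indFun, Set.mem_singleton_iff, hz]
  · intro h
    rw [Finsupp.notMem_support_iff.mp h]; simp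

lemma zF_mem {n : ℕ} {X : Fin n → Type*} (x y : ∀ i, X i) (C : ∀ i, Set (X i))
    (F : Finset (Fin n)) :
    (∀ i, (if i ∈ F then x i else y i) ∈ C i)
      ↔ ((Finset.univ.filter fun i => y i ∈ C i)ᶜ ⊆ F
          ∧ F ⊆ Finset.univ.filter fun i => x i ∈ C i) := by
  constructor
  · intro h
    constructor
    · intro i hi
      by_contra hiF
      have h2 := h i
      rw [if_neg hiF] at h2
      simp only [Finset.mem_compl, Finset.mem_filter, Finset.mem_univ, true_and] at hi
      exact hi h2
    · intro i hi
      have h2 := h i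
      rw [if_pos hi] at h2
      simp only [Finset.mem_filter, Finset.mem_univ, true_and]
      exact h2
  · rintro ⟨h1, h2⟩ i
    by_cases hi : i ∈ F
    · rw [if_pos hi]
      have := h2 hi
      simpa using this
    · rw [if_neg hi]
      by_contra hy
      exact hi (h1 (by simpa using hy))

lemma muKN_eval {n : ℕ} {X : Fin n → Type*} (k : ℕ) (hk : 1 ≤ k) (hkn : k ≤ n)
    (x y : ∀ i, X i) (C : ∀ i, Set (X i))
    (hT : (Finset.univ.filter fun i => y i ∈ C i)ᶜ ⊆ (Finset.univ.filter fun i => x i ∈ C i)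
      → n - k + 1 ≤ ((Finset.univ.filter fun i => x i ∈ C i)
          ∩ (Finset.univ.filter fun i => y i ∈ C i)).card) :
    Finsupp.linearCombination ℝ (indFun {w : ∀ i, X i | ∀ i, w i ∈ C i}) (muKN k x y)
      = 0 := by
  set P := Finset.univ.filter fun i => x i ∈ C i with hP
  set Q := Finset.univ.filter fun i => y i ∈ C i with hQ
  have lhs_eq : Finsupp.linearCombination ℝ (indFun {w : ∀ i, X i | ∀ i, w i ∈ C i})
        (muKN k x y)
      = (if P = Finset.univ then (1:ℝ) else 0) + ∑ j ∈ Finset.range k,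
        (-1:ℝ)^(k-j) * ((n-j-1).choose (n-k) : ℝ) *
          (((Finset.powersetCard j Finset.univ).filter (fun F => Qᶜ ⊆ F ∧ F ⊆ P)).card : ℝ) := by
    rw [muKN, map_add, map_sum, Finsupp.linearCombination_single, one_smul]
    congr 1
    · show indFun {w : ∀ i, X i | ∀ i, w i ∈ C i} x = _
      have hiff : (x ∈ {w : ∀ i, X i | ∀ i, w i ∈ C i}) ↔ (P = Finset.univ) := by
        rw [Set.mem_setOf_eq, hP, Finset.eq_univ_iff_forall]
        simp
      simp only [indFun, hiff]
    · refine Finset.sum_congr rfl fun j _ => ?_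
      rw [_root_.map_smul, map_sum, smul_eq_mul]
      congr 1
      have hterm : ∀ F ∈ Finset.powersetCard j (Finset.univ : Finset (Fin n)),
          Finsupp.linearCombination ℝ (indFun {w : ∀ i, X i | ∀ i, w i ∈ C i})
            (Finsupp.single (fun i => if i ∈ F then x i else y i) (1:ℝ))
          = if (Qᶜ ⊆ F ∧ F ⊆ P) then (1:ℝ) else 0 := by
        intro F _
        rw [Finsupp.linearCombination_single, one_smul]
        have hiff : ((fun i => if i ∈ F then x i else y i)
            ∈ {w : ∀ i, X i | ∀ i, w i ∈ C i}) ↔ (Qᶜ ⊆ F ∧ F ⊆ P) := by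
          rw [Set.mem_setOf_eq]
          exact zF_mem x y C F
        simp only [indFun, hiff]
      rw [Finset.sum_congr rfl hterm, Finset.sum_boole]
  rw [lhs_eq]
  exact eval_zero k hk hkn P Q hT


/-- `μ_k^n[x,y] ∈ M_k(X)`, and it is the zero measure when
`|{i : x_i ≠ y_i}| < k`. -/
theorem statement0 {n : ℕ} {X : Fin n → Type*} (hne : ∀ i, Nonempty (X i))
    (hn : 1 ≤ n) (k : ℕ) (hk : 1 ≤ k) (hkn : k ≤ n) (x y : ∀ i, X i) :
    memMk k (muKN k x y) ∧
      ((Finset.univ.filter fun i => x i ≠ y i).card < k → muKN k x y = 0) := by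
  constructor
  · intro A hA
    rw [dmMeas_eq_lin]
    apply muKN_eval k hk hkn x y A
    intro _
    refine le_trans hA (Finset.card_le_card ?_)
    intro i hi
    simp only [Finset.mem_filter, Finset.mem_univ, true_and] at hi
    simp [Finset.mem_inter, Finset.mem_filter, hi]
  · intro hL
    ext w
    have hset : {v : ∀ i, X i | ∀ i, v i ∈ ({w i} : Set (X i))} = {w} := by
      ext v
      simp [funext_iff, Set.mem_setOf_eq, eq_comm]
    rw [Finsupp.coe_zero, Pi.zero_apply, apply_eq_lin, ← hset]
    apply muKN_eval k hk hkn x y (fun i => ({w i} : Set (X i)))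
    intro hBP
    have hLsub : (Finset.univ.filter fun i => x i ≠ y i)ᶜ
        ⊆ (Finset.univ.filter fun i => x i ∈ ({w i} : Set (X i)))
          ∩ (Finset.univ.filter fun i => y i ∈ ({w i} : Set (X i))) := by
      intro i hi
      simp only [Finset.mem_compl, Finset.mem_filter, Finset.mem_univ, true_and,
        not_not] at hi
      -- hi : x i = y i
      have hyi : y i ∈ ({w i} : Set (X i)) := by
        by_contra hy
        have hxi : x i ∈ ({w i} : Set (X i)) := by
          have hmem : i ∈ (Finset.univ.filter fun i => y i ∈ ({w i} : Set (X i)))ᶜ := by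
            simp only [Finset.mem_compl, Finset.mem_filter, Finset.mem_univ, true_and]
            exact hy
          have := hBP hmem
          simpa using this
        exact hy (hi ▸ hxi)
      have hxi : x i ∈ ({w i} : Set (X i)) := by
        rw [Set.mem_singleton_iff] at hyi ⊢
        rw [hi, hyi]
      simp only [Finset.mem_inter, Finset.mem_filter, Finset.mem_univ, true_and]
      exact ⟨hxi, hyi⟩
    have hLc : ((Finset.univ.filter fun i => x i ≠ y i)ᶜ : Finset (Fin n)).card
        = n - (Finset.univ.filter fun i => x i ≠ y i).card := by
      rw [Finset.card_compl, Fintype.card_fin]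
    have hcle := Finset.card_le_card hLsub
    have hLn : (Finset.univ.filter fun i => x i ≠ y i).card ≤ n := by
      simpa [Fintype.card_fin] using
        Finset.card_le_univ (Finset.univ.filter fun i => x i ≠ y i)
    refine le_trans ?_ (hcle.trans_eq (by congr))
    omega

end IndepRBF
end

section
/- Let X_1,…,X_n be nonempty sets and, for each 1 ≤ i ≤ n, let μ_i be a discrete signed measure on X_i, with the restriction that μ_i(X_i) = 0 for at least two indices i. Then there exist a real number M ≥ 0 and a discrete probability measure P on X = X_1 × ⋯ × X_n such that μ_1 × ⋯ × μ_n = (−1)^n M (P − P_1 × ⋯ × P_n), where P_i denotes the i-th one-dimensional marginal of P. -/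
open MeasureTheory

attribute [local instance] Classical.propDecidable

namespace IndepRBF

lemma dmOfFun_apply {α : Type*} (s : Finset α) (c : α → ℝ) (x : α) :
    dmOfFun s c x = if x ∈ s then c x else 0 := rfl

lemma support_dmOfFun_subset {α : Type*} {s : Finset α} {c : α → ℝ} :
    (dmOfFun s c).support ⊆ s := Finsupp.support_onFinset_subset

lemma dmTotal_eq_sum {α : Type*} (μ : α →₀ ℝ) {T : Finset α} (hT : μ.support ⊆ T) :
    dmTotal μ = ∑ x ∈ T, μ x :=
  Finset.sum_subset hT (fun x _ hx => Finsupp.notMem_support_iff.mp hx)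

lemma dmPi_apply {n : ℕ} {X : Fin n → Type*} (μ : ∀ i, X i →₀ ℝ) (x : ∀ i, X i) :
    dmPi μ x = ∏ i, μ i (x i) := by
  rw [dmPi, dmOfFun_apply]
  split_ifs with h
  · rfl
  · obtain ⟨i, hi⟩ : ∃ i, x i ∉ (μ i).support := by
      by_contra hc; push_neg at hc
      exact h (Fintype.mem_piFinset.mpr hc)
    symm
    exact Finset.prod_eq_zero (Finset.mem_univ i) (Finsupp.notMem_support_iff.mp hi)

lemma marg1_apply {n : ℕ} {X : Fin n → Type*} (P : (∀ i, X i) →₀ ℝ) (i : Fin n)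
    (a : X i) : marg1 P i a = ∑ y ∈ P.support, if y i = a then P y else 0 := by
  rw [marg1, dmOfFun_apply]
  split_ifs with h
  · rfl
  · symm; apply Finset.sum_eq_zero; intro y hy
    rw [if_neg]; intro hya
    exact h (Finset.mem_image.mpr ⟨y, hy, hya⟩)

lemma marg1_eq_sum {n : ℕ} {X : Fin n → Type*} (P : (∀ i, X i) →₀ ℝ)
    {T : Finset (∀ i, X i)} (hT : P.support ⊆ T) (i : Fin n) (a : X i) :
    marg1 P i a = ∑ y ∈ T, if y i = a then P y else 0 := by
  rw [marg1_apply]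
  apply Finset.sum_subset hT
  intro y _ hy
  simp [Finsupp.notMem_support_iff.mp hy]

lemma sum_ite_piFinset {n : ℕ} {X : Fin n → Type*} (s : ∀ k, Finset (X k))
    (f : ∀ k, X k → ℝ) (i : Fin n) (a : X i) :
    ∑ y ∈ Fintype.piFinset s, (if y i = a then ∏ k, f k (y k) else 0)
      = ∏ k, ∑ b ∈ Function.update s i ((s i).filter (· = a)) k, f k b := by
  rw [Finset.prod_univ_sum, ← Finset.sum_filter]
  apply Finset.sum_congr _ (fun _ _ => rfl)
  ext y
  simp only [Finset.mem_filter, Fintype.mem_piFinset]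
  constructor
  · rintro ⟨hy, hya⟩ k
    by_cases hk : k = i
    · subst hk; rw [Function.update_self]
      exact Finset.mem_filter.mpr ⟨hy k, hya⟩
    · rw [Function.update_of_ne hk]; exact hy k
  · intro hy
    have hi := hy i
    rw [Function.update_self, Finset.mem_filter] at hi
    refine ⟨fun k => ?_, hi.2⟩
    by_cases hk : k = i
    · subst hk; exact hi.1
    · have := hy k; rwa [Function.update_of_ne hk] at this

set_option maxHeartbeats 1000000 in
/-- if at least two of the `μ_i` have total mass zero, then
`μ_1 × ⋯ × μ_n = (−1)^n M (P − P_1 × ⋯ × P_n)` for some `M ≥ 0` and a discrete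
probability `P`. -/
theorem statement1 {n : ℕ} {X : Fin n → Type*} (hne : ∀ i, Nonempty (X i))
    (μ : ∀ i, X i →₀ ℝ)
    (hμ : 2 ≤ (Finset.univ.filter fun i => dmTotal (μ i) = 0).card) :
    ∃ M : ℝ, 0 ≤ M ∧ ∃ P : (∀ i, X i) →₀ ℝ, IsDiscProb P ∧
      dmPi μ = ((-1 : ℝ) ^ n * M) • (P - prodMarg1 P) := by
  classical
  by_cases hz : ∃ i, μ i = 0
  · -- degenerate case : the product measure is zero
    obtain ⟨i0, hi0⟩ := hz
    refine ⟨0, le_refl 0, dmOfFun {fun i => (hne i).some} (fun _ => 1), ⟨?_, ?_⟩, ?_⟩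
    · intro x; rw [dmOfFun_apply]; split_ifs <;> norm_num
    · rw [dmTotal_eq_sum _ support_dmOfFun_subset]
      simp [dmOfFun_apply]
    · rw [mul_zero, zero_smul]
      ext x
      rw [dmPi_apply, Finsupp.coe_zero, Pi.zero_apply]
      exact Finset.prod_eq_zero (Finset.mem_univ i0) (by rw [hi0]; rfl)
  push_neg at hz
  -- setup
  set s : ∀ k, Finset (X k) := fun k => (μ k).support with hs_def
  have hsne : ∀ k, (s k).Nonempty := fun k => Finsupp.support_nonempty_iff.mpr (hz k)
  have hcard : ∀ k, ((s k).card : ℝ) ≠ 0 := fun k => by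
    exact_mod_cast Finset.card_ne_zero_of_mem (hsne k).choose_spec
  set c : ℝ := ∏ k, ((s k).card : ℝ)⁻¹ with hc_def
  have hc : 0 < c := Finset.prod_pos fun k _ => by
    have := (hsne k).card_pos
    positivity
  set Q : ∀ k, X k →₀ ℝ := fun k => dmOfFun (s k) (fun _ => ((s k).card : ℝ)⁻¹)
    with hQ_def
  set box : Finset (∀ i, X i) := Fintype.piFinset s with hbox_def
  set B : ℝ := ∑ y ∈ box, |∏ k, μ k (y k)| with hB_def
  have hB : 0 ≤ B := Finset.sum_nonneg fun y _ => abs_nonneg _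

  set M : ℝ := (B + c) / c with hM_def
  have hM : 0 < M := div_pos (by linarith) hc
  have hMc : M * c = B + c := div_mul_cancel₀ _ (ne_of_gt hc)
  set P : (∀ i, X i) →₀ ℝ :=
    dmOfFun box (fun x => M⁻¹ * ((-1 : ℝ) ^ n * ∏ k, μ k (x k)) + c) with hP_def
  have hPapp : ∀ x, P x =
      if x ∈ box then M⁻¹ * ((-1 : ℝ) ^ n * ∏ k, μ k (x k)) + c else 0 := by
    intro x; rw [hP_def, dmOfFun_apply]; split_ifs <;> rfl
  -- there is a balanced index different from any given index
  have hbal : ∀ i : Fin n, ∃ j, j ≠ i ∧ dmTotal (μ j) = 0 := by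
    intro i
    obtain ⟨j, hj, hji⟩ := Finset.exists_mem_ne (lt_of_lt_of_le one_lt_two hμ) i
    exact ⟨j, hji, (Finset.mem_filter.mp hj).2⟩
  have hbal0 : ∃ j, dmTotal (μ j) = 0 := by
    have h1 : (Finset.univ.filter fun i => dmTotal (μ i) = 0).Nonempty :=
      Finset.card_pos.mp (by omega)
    obtain ⟨j, hj⟩ := h1
    exact ⟨j, (Finset.mem_filter.mp hj).2⟩
  -- total-mass computations
  have key0 : ∑ y ∈ box, ∏ k, μ k (y k) = 0 := by
    rw [hbox_def, ← Finset.prod_univ_sum]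
    obtain ⟨j, hj⟩ := hbal0
    exact Finset.prod_eq_zero (Finset.mem_univ j) hj
  have hboxbound : ∀ x ∈ box, |∏ k, μ k (x k)| ≤ B := by
    intro x hx
    rw [hB_def]
    exact Finset.single_le_sum (f := fun y => |∏ k, μ k (y k)|)
      (fun y _ => abs_nonneg _) hx
  have hboxout : ∀ x ∉ box, ∏ k, μ k (x k) = 0 := by
    intro x hx
    obtain ⟨k, hk⟩ : ∃ k, x k ∉ s k := by
      by_contra hcon; push_neg at hcon
      exact hx (Fintype.mem_piFinset.mpr hcon)
    exact Finset.prod_eq_zero (Finset.mem_univ k) (Finsupp.notMem_support_iff.mp hk)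
  -- nonnegativity of P
  have hP0 : ∀ x, 0 ≤ P x := by
    intro x
    rw [hPapp]
    split_ifs with hx
    · have h1 : |(-1 : ℝ) ^ n * ∏ k, μ k (x k)| ≤ M * c := by
        rw [abs_mul, abs_pow, abs_neg, abs_one, one_pow, one_mul, hMc]
        linarith [hboxbound x hx]
      have h2 : -(M * c) ≤ (-1 : ℝ) ^ n * ∏ k, μ k (x k) := by
        have := neg_abs_le ((-1 : ℝ) ^ n * ∏ k, μ k (x k))
        linarith
      have h3 := mul_le_mul_of_nonneg_left h2 (le_of_lt (inv_pos.mpr hM))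
      have h4 : M⁻¹ * -(M * c) = -c := by
        rw [mul_neg, ← mul_assoc, inv_mul_cancel₀ (ne_of_gt hM), one_mul]
      rw [h4] at h3
      linarith
    · exact le_refl 0
  -- total mass of P is 1
  have hboxcard : (box.card : ℝ) * c = 1 := by
    rw [hbox_def, Fintype.card_piFinset, hc_def]
    push_cast
    rw [← Finset.prod_mul_distrib]
    exact Finset.prod_eq_one fun k _ => mul_inv_cancel₀ (hcard k)
  have hPtotal : dmTotal P = 1 := by
    rw [dmTotal_eq_sum P support_dmOfFun_subset]
    have : ∀ y ∈ box, P y = M⁻¹ * ((-1 : ℝ) ^ n * ∏ k, μ k (y k)) + c := by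
      intro y hy; rw [hPapp, if_pos hy]
    rw [Finset.sum_congr rfl this, Finset.sum_add_distrib, Finset.sum_const,
      nsmul_eq_mul]
    have : ∑ y ∈ box, M⁻¹ * ((-1 : ℝ) ^ n * ∏ k, μ k (y k))
        = M⁻¹ * ((-1 : ℝ) ^ n * ∑ y ∈ box, ∏ k, μ k (y k)) := by
      rw [Finset.mul_sum, Finset.mul_sum]
    rw [this, key0, mul_zero, mul_zero, zero_add, hboxcard]
  -- Q values
  have hQapp : ∀ k (b : X k), Q k b = if b ∈ s k then ((s k).card : ℝ)⁻¹ else 0 := by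
    intro k b; rw [hQ_def, dmOfFun_apply]
  have hQsum : ∀ k, ∑ b ∈ s k, Q k b = 1 := by
    intro k
    rw [Finset.sum_congr rfl fun b hb => by rw [hQapp, if_pos hb]]
    rw [Finset.sum_const, nsmul_eq_mul, mul_inv_cancel₀ (hcard k)]
  have hQbox : ∀ x ∈ box, ∏ k, Q k (x k) = c := by
    intro x hx
    rw [hc_def]
    exact Finset.prod_congr rfl fun k _ => by
      rw [hQapp, if_pos (Fintype.mem_piFinset.mp hx k)]
  have hQboxout : ∀ x ∉ box, ∏ k, Q k (x k) = 0 := by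
    intro x hx
    obtain ⟨k, hk⟩ : ∃ k, x k ∉ s k := by
      by_contra hcon; push_neg at hcon
      exact hx (Fintype.mem_piFinset.mpr hcon)
    exact Finset.prod_eq_zero (Finset.mem_univ k) (by rw [hQapp, if_neg hk])
  -- marginals of P
  have hmarg : ∀ i (a : X i), marg1 P i a = Q i a := by
    intro i a
    rw [marg1_eq_sum P support_dmOfFun_subset i a]
    have hterm : ∀ y ∈ box, (if y i = a then P y else 0)
        = (if y i = a then M⁻¹ * ((-1 : ℝ) ^ n * ∏ k, μ k (y k)) else 0)
          + (if y i = a then ∏ k, Q k (y k) else 0) := by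
      intro y hy
      rw [hPapp, if_pos hy, hQbox y hy]
      split_ifs <;> simp
    rw [Finset.sum_congr rfl hterm, Finset.sum_add_distrib]
    have h1 : ∑ y ∈ box, (if y i = a then M⁻¹ * ((-1 : ℝ) ^ n * ∏ k, μ k (y k)) else 0)
        = 0 := by
      have : ∀ y : ∀ i, X i, (if y i = a then M⁻¹ * ((-1 : ℝ) ^ n * ∏ k, μ k (y k)) else 0)
          = (M⁻¹ * (-1 : ℝ) ^ n) * (if y i = a then ∏ k, μ k (y k) else 0) := by
        intro y; split_ifs <;> ring
      rw [Finset.sum_congr rfl fun y _ => this y, ← Finset.mul_sum, hbox_def,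
        sum_ite_piFinset s (fun k b => μ k b) i a]
      obtain ⟨j, hji, hj⟩ := hbal i
      have : ∑ b ∈ Function.update s i ((s i).filter (· = a)) j, μ j b = 0 := by
        rw [Function.update_of_ne hji]; exact hj
      rw [Finset.prod_eq_zero (Finset.mem_univ j) this, mul_zero]
    have h2 : ∑ y ∈ box, (if y i = a then ∏ k, Q k (y k) else 0) = Q i a := by
      rw [hbox_def, sum_ite_piFinset s (fun k b => Q k b) i a]
      rw [Fintype.prod_eq_single i (fun k hk => by
        rw [Function.update_of_ne hk]; exact hQsum k)]
      rw [Function.update_self]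
      have hfil : (s i).filter (· = a) = if a ∈ s i then {a} else ∅ := by
        split_ifs with ha
        · ext b
          simp only [Finset.mem_filter, Finset.mem_singleton]
          constructor
          · exact fun h => h.2
          · rintro rfl
            exact ⟨ha, rfl⟩
        · ext b
          simp only [Finset.mem_filter, Finset.notMem_empty, iff_false, not_and]
          intro hb hba
          exact ha (hba ▸ hb)
      rw [hfil]
      split_ifs with ha
      · rw [Finset.sum_singleton]
      · rw [Finset.sum_empty, hQapp, if_neg ha]
    rw [h1, h2, zero_add]
  have hprodM : ∀ x, prodMarg1 P x = ∏ k, Q k (x k) := by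
    intro x
    rw [prodMarg1, dmPi_apply]
    exact Finset.prod_congr rfl fun k _ => by rw [hmarg]
  -- conclusion
  refine ⟨M, le_of_lt hM, P, ⟨hP0, hPtotal⟩, ?_⟩
  ext x
  rw [dmPi_apply, Finsupp.smul_apply, Finsupp.sub_apply, hprodM, hPapp]
  have hpow : ((-1 : ℝ) ^ n) * ((-1 : ℝ) ^ n) = 1 := by
    rw [← mul_pow]; norm_num
  by_cases hx : x ∈ box
  · rw [if_pos hx, hQbox x hx, smul_eq_mul]
    have e1 : M⁻¹ * ((-1 : ℝ) ^ n * ∏ k, μ k (x k)) + c - c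
        = M⁻¹ * ((-1 : ℝ) ^ n * ∏ k, μ k (x k)) := by ring
    rw [e1]
    have e2 : ((-1 : ℝ) ^ n * M) * (M⁻¹ * ((-1 : ℝ) ^ n * ∏ k, μ k (x k)))
        = (((-1 : ℝ) ^ n * (-1 : ℝ) ^ n) * (M * M⁻¹)) * ∏ k, μ k (x k) := by ring
    rw [e2, hpow, mul_inv_cancel₀ (ne_of_gt hM), one_mul, one_mul]
  · rw [if_neg hx, hQboxout x hx, hboxout x hx, sub_zero, smul_eq_mul, mul_zero]

end IndepRBF
end

section
/- Let g : [0,∞)^n → ℝ be continuous and define G : [0,∞)^n → ℝ by G(t) := Σ_{α ∈ {0,1}^n} (−1)^{n − Σ_i α_i} g(t^α), where t^α ∈ [0,∞)^n has i-th coordinate t_i if α_i = 1 and 0 if α_i = 0. Then: (a) for every d ∈ ℕ and every μ ∈ M_n((ℝ^d)_n), ∬ (−1)^n g(‖u_1−v_1‖²,…,‖u_n−v_n‖²) dμ(u) dμ(v) = ∬ (−1)^n G(‖u_1−v_1‖²,…,‖u_n−v_n‖²) dμ(u) dμ(v); consequently g is PDI_n^∞ if and only if G is PDI_n^∞; (b)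 if g(t) = 0 for every t ∈ ∂_{n−1}^n then G = g; (c) G(t) = 0 for every t ∈ ∂_{n−1}^n. -/
open MeasureTheory

attribute [local instance] Classical.propDecidable

namespace IndepRBF

/-- `G(t) = Σ_{α ∈ {0,1}^n} (−1)^{n−|α|} g(t^α)`, where subsets `F` encode the `α` with
`α_i = 1` exactly for `i ∈ F`. -/
noncomputable def Gof {n : ℕ} (g : (Fin n → ℝ) → ℝ) : (Fin n → ℝ) → ℝ :=
  fun t => ∑ F ∈ (Finset.univ : Finset (Fin n)).powerset,
    (-1 : ℝ) ^ (n - F.card) * g fun i => if i ∈ F then t i else 0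

lemma dmInt_sum {α β : Type*} (μ : α →₀ ℝ) (s : Finset β) (f : β → α → ℝ) :
    dmInt μ (fun x => ∑ F ∈ s, f F x) = ∑ F ∈ s, dmInt μ (f F) := by
  simp only [dmInt, Finset.mul_sum]
  exact Finset.sum_comm

lemma dmInt_smul {α : Type*} (μ : α →₀ ℝ) (c : ℝ) (f : α → ℝ) :
    dmInt μ (fun x => c * f x) = c * dmInt μ f := by
  simp only [dmInt, Finset.mul_sum]
  exact Finset.sum_congr rfl fun x _ => by ring

lemma dmInt_eq_zero_of_depends {n : ℕ} {E : Type*} [Zero E]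
    (μ : (Fin n → E) →₀ ℝ) (hμ : memMk n μ) (F : Finset (Fin n)) (hF : ∃ i, i ∉ F)
    (f : (Fin n → E) → ℝ) (hf : ∀ x y, (∀ i ∈ F, x i = y i) → f x = f y) :
    dmInt μ f = 0 := by
  classical
  set m : (Fin n → E) → (Fin n → E) := fun x i => if i ∈ F then x i else 0 with hm
  have hmF : ∀ x y : Fin n → E, m x = m y ↔ ∀ i ∈ F, x i = y i := by
    intro x y
    constructor
    · intro h i hi
      have := congrFun h i
      simpa [hm, hi] using this
    · intro h
      funext i
      by_cases hi : i ∈ F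
      · simp [hm, hi, h i hi]
      · simp [hm, hi]
  have key : ∀ a : Fin n → E,
      (∑ x ∈ μ.support.filter (fun x => m x = m a), μ x) = 0 := by
    intro a
    obtain ⟨i₀, hi₀⟩ := hF
    set A : Fin n → Set E := fun i => if i ∈ F then ({a i} : Set E) else Set.univ with hA
    have hbound : n - n + 1 ≤
        (Finset.univ.filter fun i => A i = (Set.univ : Set E)).card := by
      have hmem : i₀ ∈ Finset.univ.filter fun i => A i = (Set.univ : Set E) := by
        simp [hA, hi₀]
      have hc := Finset.card_pos.mpr ⟨i₀, hmem⟩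
      omega
    have h0 := hμ A hbound
    have heq : dmMeas μ {x | ∀ i, x i ∈ A i}
        = ∑ x ∈ μ.support.filter (fun x => m x = m a), μ x := by
      unfold dmMeas
      rw [Finset.sum_filter]
      refine Finset.sum_congr rfl fun x _ => ?_
      have hiff : (x ∈ {z : Fin n → E | ∀ i, z i ∈ A i}) ↔ m x = m a := by
        rw [hmF]
        constructor
        · intro h i hi
          have := h i
          simpa [hA, hi] using this
        · intro h i
          by_cases hi : i ∈ F
          · simpa [hA, hi] using h i hi
          · simp [hA, hi]
      by_cases hx : m x = m a
      · rw [if_pos hx, if_pos (hiff.mpr hx)]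
      · rw [if_neg hx, if_neg (fun h => hx (hiff.mp h))]
    rw [← heq]
    exact h0
  have hfib : dmInt μ f
      = ∑ y ∈ μ.support.image m, ∑ x ∈ μ.support.filter (fun x => m x = y), μ x * f x := by
    unfold dmInt
    rw [Finset.sum_fiberwise_of_maps_to (fun x hx => Finset.mem_image_of_mem m hx)]
  rw [hfib]
  refine Finset.sum_eq_zero fun y hy => ?_
  obtain ⟨a, ha, rfl⟩ := Finset.mem_image.mp hy
  have hcongr : ∀ x ∈ μ.support.filter (fun x => m x = m a), μ x * f x = μ x * f a := by
    intro x hx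
    obtain ⟨-, hx2⟩ := Finset.mem_filter.mp hx
    rw [hf x a ((hmF x a).mp hx2)]
  rw [Finset.sum_congr rfl hcongr, ← Finset.sum_mul, key a, zero_mul]

lemma dblInt_mask_eq_zero {n d : ℕ} (μ : (Fin n → EuclideanSpace ℝ (Fin d)) →₀ ℝ)
    (hμ : memMk n μ) (F : Finset (Fin n)) (hF : ∃ i, i ∉ F) (g : (Fin n → ℝ) → ℝ) :
    dblInt μ (fun t => g fun i => if i ∈ F then t i else 0) = 0 := by
  unfold dblInt
  refine dmInt_eq_zero_of_depends μ hμ F hF _ ?_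
  intro x y hxy
  unfold dmInt
  refine Finset.sum_congr rfl fun v _ => ?_
  have harg : (fun i => if i ∈ F then sqDistVec x v i else 0)
      = (fun i => if i ∈ F then sqDistVec y v i else 0) := by
    funext i
    by_cases hi : i ∈ F
    · rw [if_pos hi, if_pos hi]
      unfold sqDistVec
      rw [hxy i hi]
    · rw [if_neg hi, if_neg hi]
  show μ v * g (fun i => if i ∈ F then sqDistVec x v i else 0)
      = μ v * g (fun i => if i ∈ F then sqDistVec y v i else 0)
  rw [harg]

lemma dblInt_sum {n d : ℕ} {β : Type*} (μ : (Fin n → EuclideanSpace ℝ (Fin d)) →₀ ℝ)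
    (s : Finset β) (f : β → (Fin n → ℝ) → ℝ) :
    dblInt μ (fun t => ∑ F ∈ s, f F t) = ∑ F ∈ s, dblInt μ (f F) := by
  unfold dblInt
  rw [← dmInt_sum μ s (fun F u => dmInt μ fun v => f F (sqDistVec u v))]
  refine congrArg _ ?_
  funext u
  exact dmInt_sum μ s _

lemma dblInt_smul {n d : ℕ} (μ : (Fin n → EuclideanSpace ℝ (Fin d)) →₀ ℝ)
    (c : ℝ) (f : (Fin n → ℝ) → ℝ) :
    dblInt μ (fun t => c * f t) = c * dblInt μ f := by
  unfold dblInt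
  rw [← dmInt_smul μ c (fun u => dmInt μ fun v => f (sqDistVec u v))]
  refine congrArg _ ?_
  funext u
  exact dmInt_smul μ c _

lemma dblInt_Gof {n d : ℕ} (g : (Fin n → ℝ) → ℝ)
    (μ : (Fin n → EuclideanSpace ℝ (Fin d)) →₀ ℝ) (hμ : memMk n μ) :
    dblInt μ (Gof g) = dblInt μ g := by
  have h1 : dblInt μ (Gof g)
      = ∑ F ∈ (Finset.univ : Finset (Fin n)).powerset,
          (-1 : ℝ) ^ (n - F.card) *
            dblInt μ (fun t => g fun i => if i ∈ F then t i else 0) := by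
    rw [show Gof g = fun t => ∑ F ∈ (Finset.univ : Finset (Fin n)).powerset,
        (-1 : ℝ) ^ (n - F.card) * g (fun i => if i ∈ F then t i else 0) from rfl]
    rw [dblInt_sum]
    exact Finset.sum_congr rfl fun F _ => dblInt_smul μ _ _
  rw [h1, Finset.sum_eq_single (Finset.univ : Finset (Fin n))]
  · have h2 : (fun t : Fin n → ℝ =>
        g fun i => if i ∈ (Finset.univ : Finset (Fin n)) then t i else 0) = g := by
      funext t
      congr 1
      funext i
      simp
    rw [h2]
    simp
  · intro F _ hFne
    have hF : ∃ i, i ∉ F := by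
      by_contra h
      push_neg at h
      exact hFne (Finset.eq_univ_iff_forall.mpr h)
    rw [dblInt_mask_eq_zero μ hμ F hF g, mul_zero]
  · intro h
    exact absurd (Finset.mem_powerset.mpr (subset_refl _)) h

/-- (a) the double integrals of `g` and `G` against any `μ ∈ M_n` coincide,
hence `g` is `PDI_n^∞` iff `G` is; (b) if `g` vanishes on `∂_{n−1}^n` then `G = g`;
(c) `G` vanishes on `∂_{n−1}^n`. -/
theorem statement7 {n : ℕ} (g : (Fin n → ℝ) → ℝ)
    (hg : ContinuousOn g (Qset n)) :
    (∀ d : ℕ, ∀ μ : (Fin n → EuclideanSpace ℝ (Fin d)) →₀ ℝ, memMk n μ →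
      (-1 : ℝ) ^ n * dblInt μ g = (-1 : ℝ) ^ n * dblInt μ (Gof g)) ∧
    (PDI n n g ↔ PDI n n (Gof g)) ∧
    ((∀ t ∈ Qset n, (∃ i, t i = 0) → g t = 0) → ∀ t ∈ Qset n, Gof g t = g t) ∧
    (∀ t ∈ Qset n, (∃ i, t i = 0) → Gof g t = 0) := by
  refine ⟨fun d μ hμ => by rw [dblInt_Gof g μ hμ], ?_, ?_, ?_⟩
  · constructor
    · intro h d μ hμ
      have := h d μ hμ
      unfold PDI at *
      rw [show dblInt μ (Gof g) = dblInt μ g from dblInt_Gof g μ hμ]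
      exact h d μ hμ
    · intro h d μ hμ
      have := h d μ hμ
      rw [show dblInt μ g = dblInt μ (Gof g) from (dblInt_Gof g μ hμ).symm]
      exact this
  · intro hbd t ht
    have ht' : ∀ i, 0 ≤ t i := ht
    unfold Gof
    rw [Finset.sum_eq_single (Finset.univ : Finset (Fin n))]
    · simp only [Finset.card_univ, Fintype.card_fin, Nat.sub_self, pow_zero, one_mul]
      congr 1
      funext i
      simp
    · intro F _ hFne
      have hF : ∃ i, i ∉ F := by
        by_contra h
        push_neg at h
        exact hFne (Finset.eq_univ_iff_forall.mpr h)
      obtain ⟨i₀, hi₀⟩ := hF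
      have hz : g (fun i => if i ∈ F then t i else 0) = 0 := by
        apply hbd
        · intro i
          by_cases hi : i ∈ F
          · simpa [hi] using ht' i
          · simp [hi]
        · exact ⟨i₀, by simp [hi₀]⟩
      rw [hz, mul_zero]
    · intro h
      exact absurd (Finset.mem_powerset.mpr (subset_refl _)) h
  · rintro t ht ⟨i₀, hi₀⟩
    unfold Gof
    have hins : ((Finset.univ : Finset (Fin n)).powerset)
        = (insert i₀ (Finset.univ.erase i₀)).powerset := by
      rw [Finset.insert_erase (Finset.mem_univ i₀)]
    rw [hins, Finset.sum_powerset_insert (Finset.notMem_erase i₀ _),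
      ← Finset.sum_add_distrib]
    refine Finset.sum_eq_zero fun F hF => ?_
    have hi₀F : i₀ ∉ F := fun h =>
      Finset.notMem_erase i₀ Finset.univ (Finset.mem_powerset.mp hF h)
    have hmask : (fun i => if i ∈ insert i₀ F then t i else 0)
        = (fun i => if i ∈ F then t i else 0) := by
      funext i
      by_cases hii : i = i₀
      · subst hii
        simp [hi₀F, hi₀]
      · simp [Finset.mem_insert, hii]
    rw [hmask, Finset.card_insert_of_notMem hi₀F]
    have hcard : F.card < n := by
      have h1 : F.card ≤ (Finset.univ.erase i₀).card :=
        Finset.card_le_card (Finset.mem_powerset.mp hF)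
      have h2 : (Finset.univ.erase i₀).card = n - 1 := by
        rw [Finset.card_erase_of_mem (Finset.mem_univ i₀), Finset.card_univ,
          Fintype.card_fin]
      have h3 : 0 < n := i₀.pos
      omega
    have hpow : n - F.card = (n - (F.card + 1)) + 1 := by omega
    rw [hpow, pow_succ]
    ring


end IndepRBF
end

section
/- Let g : [0,∞)^n → ℝ be a PDI_n^∞ function such that g(t) = 0 for every t ∈ ∂_{n−1}^n. Then g is continuous on [0,∞)^n if and only if g is continuous at every point of ∂_{n−1}^n, i.e., for every s ∈ ∂_{n−1}^n one has g(t) → 0 as t → s in [0,∞)^n. -/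
open MeasureTheory

attribute [local instance] Classical.propDecidable

namespace IndepRBF

noncomputable def emb (r : ℝ) : EuclideanSpace ℝ (Fin 1) := WithLp.toLp 2 (fun _ => r)

lemma norm_emb_sub (a b : ℝ) : ‖emb a - emb b‖ ^ 2 = (a - b) ^ 2 := by
  rw [EuclideanSpace.norm_eq]
  rw [Real.sq_sqrt (by positivity)]
  simp [emb, Real.norm_eq_abs, sq_abs]

lemma dmInt_eq_sum_subset {α} (μ : α →₀ ℝ) (f : α → ℝ) {S : Finset α} (h : μ.support ⊆ S) :
    dmInt μ f = ∑ x ∈ S, μ x * f x :=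
  Finset.sum_subset h (fun x _ hx => by
    rw [Finsupp.notMem_support_iff.mp hx, zero_mul])

lemma dmInt_sum_s10 {ι α : Type*} [DecidableEq α] (s : Finset ι) (c : ι → ℝ) (p : ι → α)
    (f : α → ℝ) :
    dmInt (∑ σ ∈ s, c σ • Finsupp.single (p σ) (1:ℝ)) f = ∑ σ ∈ s, c σ * f (p σ) := by
  rw [dmInt_eq_sum_subset _ f (S := s.image p)]
  · have : ∀ x ∈ s.image p, (∑ σ ∈ s, c σ • Finsupp.single (p σ) (1:ℝ)) x * f x
        = ∑ σ ∈ s, c σ * (if p σ = x then f x else 0) := by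
      intro x _
      rw [Finset.sum_apply', Finset.sum_mul]
      refine Finset.sum_congr rfl fun σ _ => ?_
      rw [Finsupp.smul_apply, Finsupp.single_apply, smul_eq_mul]
      by_cases h : p σ = x <;> simp [h]
    rw [Finset.sum_congr rfl this, Finset.sum_comm]
    refine Finset.sum_congr rfl fun σ hσ => ?_
    rw [← Finset.mul_sum, Finset.sum_ite_eq (s.image p) (p σ) f,
      if_pos (Finset.mem_image_of_mem p hσ)]
  · refine (Finsupp.support_finset_sum).trans ?_
    intro x hx
    simp only [Finset.mem_biUnion] at hx
    obtain ⟨σ, hσ, hx⟩ := hx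
    have := Finsupp.support_smul hx
    rw [Finsupp.support_single_ne_zero _ one_ne_zero] at this
    simp only [Finset.mem_singleton] at this
    exact this ▸ Finset.mem_image_of_mem p hσ

lemma dmMeas_eq_dmInt {α : Type*} (μ : α →₀ ℝ) (A : Set α) :
    dmMeas μ A = dmInt μ (fun x => if x ∈ A then 1 else 0) := by
  unfold dmMeas dmInt
  refine Finset.sum_congr rfl fun x _ => ?_
  by_cases h : x ∈ A <;> simp [h]

lemma sum_prod_pi {n : ℕ} {K : Type} [Fintype K] (f : Fin n → K → ℝ) :
    ∑ σ : Fin n → K, ∏ i, f i (σ i) = ∏ i, ∑ s, f i s := by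
  rw [← Fintype.piFinset_univ]
  exact (Finset.prod_univ_sum _ _).symm

/-- The key positivity lemma extracted from `PDI n n`. -/

lemma key_s10 {n : ℕ} {g : (Fin n → ℝ) → ℝ} (hpdi : PDI n n g)
    {K : Type} [Fintype K]
    (w : Fin n → K → ℝ) (q : Fin n → K → ℝ)
    (hmass : ∀ i, ∑ s : K, w i s = 0)
    (F : Fin n → K → K → ℝ)
    (hterm : ∀ σ τ : Fin n → K,
      ((∏ i, w i (σ i)) * ∏ i, w i (τ i)) *
          g (fun i => (q i (σ i) - q i (τ i)) ^ 2)
        = ∏ i, F i (σ i) (τ i)) :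
    0 ≤ (-1:ℝ) ^ n * ∏ i, ∑ s : K, ∑ s' : K, F i s s' := by
  classical
  set p : (Fin n → K) → (Fin n → EuclideanSpace ℝ (Fin 1)) :=
    fun σ i => emb (q i (σ i)) with hp
  set c : (Fin n → K) → ℝ := fun σ => ∏ i, w i (σ i) with hc
  set μ : (Fin n → EuclideanSpace ℝ (Fin 1)) →₀ ℝ :=
    ∑ σ : Fin n → K, c σ • Finsupp.single (p σ) (1:ℝ) with hμ
  have hmem : memMk n μ := by
    intro A hA
    have hcard : 0 < (Finset.univ.filter fun i => A i = Set.univ).card := by omega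
    obtain ⟨i1, hi1⟩ := Finset.card_pos.mp hcard
    rw [Finset.mem_filter] at hi1
    rw [dmMeas_eq_dmInt, hμ, dmInt_sum_s10]
    have : ∀ σ : Fin n → K, c σ * (@ite ℝ (p σ ∈ {x | ∀ i, x i ∈ A i})
          (Classical.propDecidable _) 1 0)
        = ∏ i, (w i (σ i) * if emb (q i (σ i)) ∈ A i then 1 else 0) := by
      intro σ
      rw [Finset.prod_mul_distrib, hc]
      congr 1
      rw [Finset.prod_boole]
      by_cases h : ∀ i, emb (q i (σ i)) ∈ A i
      · rw [if_pos (by simpa using h), if_pos (by simpa using h)]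
      · rw [if_neg (by simpa using h), if_neg (by simpa using h)]
    refine Eq.trans (Finset.sum_congr rfl fun σ _ => this σ) ?_
    rw [sum_prod_pi (fun i s => w i s * if emb (q i s) ∈ A i then 1 else 0)]
    refine Finset.prod_eq_zero (Finset.mem_univ i1) ?_
    rw [hi1.2]
    simp [hmass i1]
  have hdbl : dblInt μ g = ∏ i, ∑ s : K, ∑ s' : K, F i s s' := by
    unfold dblInt
    rw [hμ, dmInt_sum_s10]
    have inner : ∀ σ, dmInt μ (fun v => g (sqDistVec (p σ) v))
        = ∑ τ : Fin n → K, c τ * g (sqDistVec (p σ) (p τ)) := by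
      intro σ; rw [hμ, dmInt_sum_s10]
    calc ∑ σ : Fin n → K, c σ * dmInt μ (fun v => g (sqDistVec (p σ) v))
        = ∑ σ : Fin n → K, ∑ τ : Fin n → K, ∏ i, F i (σ i) (τ i) := by
          refine Finset.sum_congr rfl fun σ _ => ?_
          rw [inner σ, Finset.mul_sum]
          refine Finset.sum_congr rfl fun τ _ => ?_
          have hsq : sqDistVec (p σ) (p τ) = fun i => (q i (σ i) - q i (τ i)) ^ 2 := by
            funext i; exact norm_emb_sub _ _
          rw [hsq, ← hterm σ τ, hc]; ring
      _ = ∏ i, ∑ s : K, ∑ s' : K, F i s s' := by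
          rw [← sum_prod_pi (fun i s => ∑ s' : K, F i s s')]
          refine Finset.sum_congr rfl fun σ _ => ?_
          exact sum_prod_pi (fun i s' => F i (σ i) s')
  have := hpdi 1 μ hmem
  rwa [hdbl] at this

lemma fin2 (s : Fin 2) : s = 0 ∨ s = 1 := by fin_cases s <;> simp

lemma fin3 (s : Fin 3) : s = 0 ∨ s = 1 ∨ s = 2 := by fin_cases s <;> simp

lemma g_nonneg {n : ℕ} {g : (Fin n → ℝ) → ℝ}
    (h0 : ∀ t ∈ Qset n, (∃ i, t i = 0) → g t = 0) (hpdi : PDI n n g) :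
    ∀ t ∈ Qset n, 0 ≤ g t := by
  intro t ht
  rcases Nat.eq_zero_or_pos n with hn | hn
  · subst hn
    set μ : (Fin 0 → EuclideanSpace ℝ (Fin 1)) →₀ ℝ :=
      Finsupp.single (α := Fin 0 → EuclideanSpace ℝ (Fin 1)) (fun _ => 0) (1:ℝ) with hμ
    have hmem : memMk 0 μ := fun A hA => absurd hA (by simp)
    have h1 := hpdi 1 μ hmem
    have h2 : dblInt μ g = g t := by
      have hsupp := Finsupp.support_single_ne_zero
        (α := Fin 0 → EuclideanSpace ℝ (Fin 1)) (fun _ => 0) (one_ne_zero (α := ℝ))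
      have hst : ∀ u v : Fin 0 → EuclideanSpace ℝ (Fin 1), sqDistVec u v = t :=
        fun u v => funext fun i => i.elim0
      simp [dblInt, dmInt, hμ, hsupp, hst]
    rw [h2, pow_zero, one_mul] at h1
    exact h1
  · obtain ⟨m, rfl⟩ : ∃ m, n = m + 1 := ⟨n - 1, (Nat.succ_pred_eq_of_pos hn).symm⟩
    have hn1 : m + 1 - 1 = m := rfl
    set i0 : Fin (m+1) := ⟨0, hn⟩ with hi0
    set w : Fin (m+1) → Fin 2 → ℝ := fun _ s => if s = 0 then 1 else -1 with hw
    set q : Fin (m+1) → Fin 2 → ℝ := fun i s => if s = 0 then Real.sqrt (t i) else 0 with hq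
    set F : Fin (m+1) → Fin 2 → Fin 2 → ℝ :=
      fun i s s' => if s = s' then 0 else if i = i0 then -(g t) else -1 with hF
    have hmass : ∀ i, ∑ s : Fin 2, w i s = 0 := by
      intro i; rw [Fin.sum_univ_two]; simp [hw]
    have hterm : ∀ σ τ : Fin (m+1) → Fin 2,
        ((∏ i, w i (σ i)) * ∏ i, w i (τ i)) *
            g (fun i => (q i (σ i) - q i (τ i)) ^ 2)
          = ∏ i, F i (σ i) (τ i) := by
      intro σ τ
      by_cases hall : ∀ i, σ i ≠ τ i
      · have hD : (fun i => (q i (σ i) - q i (τ i)) ^ 2) = t := by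
          funext i
          rcases fin2 (σ i) with h1 | h1 <;> rcases fin2 (τ i) with h2 | h2
          · exact absurd (h1.trans h2.symm) (hall i)
          · simp only [hq, h1, h2, if_pos rfl, if_neg one_ne_zero, sub_zero]
            exact Real.sq_sqrt (ht i)
          · simp only [hq, h1, h2, if_pos rfl, if_neg one_ne_zero, zero_sub, neg_sq]
            exact Real.sq_sqrt (ht i)
          · exact absurd (h1.trans h2.symm) (hall i)
        have hww : ∀ i, w i (σ i) * w i (τ i) = -1 := by
          intro i
          rcases fin2 (σ i) with h1 | h1 <;> rcases fin2 (τ i) with h2 | h2 <;>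
            first
              | exact absurd (h1.trans h2.symm) (hall i)
              | simp [hw, h1, h2]
        have hL : (∏ i, w i (σ i)) * ∏ i, w i (τ i) = (-1 : ℝ) ^ (m+1) := by
          rw [← Finset.prod_mul_distrib, Finset.prod_congr rfl (fun i _ => hww i),
            Finset.prod_const, Finset.card_univ, Fintype.card_fin]
        have hR : ∏ i, F i (σ i) (τ i) = -(g t) * (-1 : ℝ) ^ m := by
          rw [Finset.prod_congr rfl
            (fun i _ => show F i (σ i) (τ i) = if i = i0 then -(g t) else -1 from
              if_neg (hall i))]
          rw [← Finset.mul_prod_erase Finset.univ _ (Finset.mem_univ i0), if_pos rfl]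
          congr 1
          rw [Finset.prod_congr rfl (fun j hj => if_neg (Finset.mem_erase.mp hj).1),
            Finset.prod_const, Finset.card_erase_of_mem (Finset.mem_univ i0),
            Finset.card_univ, Fintype.card_fin, Nat.add_sub_cancel]
        rw [hD, hL, hR, pow_succ]
        ring
      · push_neg at hall
        obtain ⟨i, hi⟩ := hall
        have hR : ∏ j, F j (σ j) (τ j) = 0 :=
          Finset.prod_eq_zero (Finset.mem_univ i) (by simp [hF, hi])
        have hz : g (fun i => (q i (σ i) - q i (τ i)) ^ 2) = 0 := by
          apply h0 _ (fun j => sq_nonneg _) ⟨i, by simp [hi]⟩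
        rw [hz, hR, mul_zero]
    have hk := key_s10 hpdi w q hmass F hterm
    have hFsum : ∀ i, (∑ s : Fin 2, ∑ s' : Fin 2, F i s s')
        = if i = i0 then -(2 * g t) else -2 := by
      intro i
      simp only [Fin.sum_univ_two, hF]
      by_cases h : i = i0 <;> simp [h] <;> ring
    rw [Finset.prod_congr rfl (fun i _ => hFsum i)] at hk
    rw [← Finset.mul_prod_erase Finset.univ _ (Finset.mem_univ i0), if_pos rfl,
      Finset.prod_congr rfl (fun j hj => if_neg (Finset.mem_erase.mp hj).1),
      Finset.prod_const, Finset.card_erase_of_mem (Finset.mem_univ i0),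
      Finset.card_univ, Fintype.card_fin] at hk
    rw [hn1] at hk
    have h1 : ((-1 : ℝ)) ^ m * (-2) ^ m = 2 ^ m := by
      rw [← mul_pow]; norm_num
    have he : (-1 : ℝ) ^ (m+1) * (-(2 * g t) * (-2) ^ m) = 2 ^ (m+1) * g t := by
      rw [pow_succ, pow_succ]
      linear_combination (2 * g t) * h1
    rw [he] at hk
    nlinarith [pow_pos (show (0:ℝ) < 2 by norm_num) (m+1), hk]

lemma family {n : ℕ} {g : (Fin n → ℝ) → ℝ}
    (h0 : ∀ t ∈ Qset n, (∃ i, t i = 0) → g t = 0) (hpdi : PDI n n g)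
    {t : Fin n → ℝ} (i0 : Fin n) (ht : ∀ j, j ≠ i0 → 0 < t j)
    (x y α β : ℝ) :
    α * β * g (Function.update t i0 ((x - y) ^ 2)) ≤
      α * (α + β) * g (Function.update t i0 (x ^ 2)) +
      β * (α + β) * g (Function.update t i0 (y ^ 2)) := by
  obtain ⟨m, rfl⟩ : ∃ m, n = m + 1 := ⟨n - 1, (Nat.succ_pred_eq_of_pos i0.pos).symm⟩
  have hQmem : ∀ r : ℝ, 0 ≤ r → Function.update t i0 r ∈ Qset (m+1) := by
    intro r hr j
    rw [Function.update_apply]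
    by_cases hj : j = i0
    · rw [if_pos hj]; exact hr
    · rw [if_neg hj]; exact (ht j hj).le
  have hdiag : g (Function.update t i0 0) = 0 :=
    h0 _ (hQmem 0 le_rfl) ⟨i0, by simp⟩
  set X : Fin 3 → ℝ := fun s => if s = 0 then x else if s = 1 then y else 0 with hX
  set w : Fin (m+1) → Fin 3 → ℝ := fun i s =>
    if i = i0 then (if s = 0 then α else if s = 1 then β else -(α+β))
    else (if s = 0 then 1 else if s = 1 then -1 else 0) with hw
  set q : Fin (m+1) → Fin 3 → ℝ := fun i s =>
    if i = i0 then X s else (if s = 0 then Real.sqrt (t i) else 0) with hq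
  set F : Fin (m+1) → Fin 3 → Fin 3 → ℝ := fun i s s' =>
    if i = i0 then w i0 s * w i0 s' * g (Function.update t i0 ((X s - X s') ^ 2))
    else (if (s = 0 ∧ s' = 1) ∨ (s = 1 ∧ s' = 0) then -1 else 0) with hF
  have hmass : ∀ i, ∑ s : Fin 3, w i s = 0 := by
    intro i
    rw [Fin.sum_univ_three]
    by_cases h : i = i0 <;> simp [hw, h] <;> ring
  have hterm : ∀ σ τ : Fin (m+1) → Fin 3,
      ((∏ i, w i (σ i)) * ∏ i, w i (τ i)) *
          g (fun i => (q i (σ i) - q i (τ i)) ^ 2)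
        = ∏ i, F i (σ i) (τ i) := by
    intro σ τ
    by_cases hgood : ∀ j, j ≠ i0 → ((σ j = 0 ∧ τ j = 1) ∨ (σ j = 1 ∧ τ j = 0))
    · have hD : (fun i => (q i (σ i) - q i (τ i)) ^ 2)
          = Function.update t i0 ((X (σ i0) - X (τ i0)) ^ 2) := by
        funext j
        rw [Function.update_apply]
        by_cases hj : j = i0
        · subst hj; simp [hq]
        · rw [if_neg hj]
          rcases hgood j hj with ⟨h1, h2⟩ | ⟨h1, h2⟩ <;>
            simp only [hq, if_neg hj, h1, h2, if_pos rfl, one_ne_zero, if_neg,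
              Fin.one_eq_zero_iff, OfNat.ofNat_ne_one, ite_false, ite_true]
          · rw [sub_zero]; exact Real.sq_sqrt (ht j hj).le
          · rw [zero_sub, neg_sq]; exact Real.sq_sqrt (ht j hj).le
      rw [hD]
      rw [← Finset.mul_prod_erase Finset.univ (fun i => w i (σ i)) (Finset.mem_univ i0),
          ← Finset.mul_prod_erase Finset.univ (fun i => w i (τ i)) (Finset.mem_univ i0),
          ← Finset.mul_prod_erase Finset.univ (fun i => F i (σ i) (τ i)) (Finset.mem_univ i0)]
      have hprod : (∏ j ∈ Finset.univ.erase i0, w j (σ j)) *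
          ∏ j ∈ Finset.univ.erase i0, w j (τ j)
          = ∏ j ∈ Finset.univ.erase i0, F j (σ j) (τ j) := by
        rw [← Finset.prod_mul_distrib]
        refine Finset.prod_congr rfl fun j hj => ?_
        have hj' := (Finset.mem_erase.mp hj).1
        rcases hgood j hj' with ⟨h1, h2⟩ | ⟨h1, h2⟩ <;> simp [hF, hw, h1, h2, hj']
      have hFi0 : F i0 (σ i0) (τ i0)
          = w i0 (σ i0) * w i0 (τ i0) *
            g (Function.update t i0 ((X (σ i0) - X (τ i0)) ^ 2)) := by
        simp [hF]
      rw [hFi0, ← hprod]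
      ring
    · push_neg at hgood
      obtain ⟨j, hj, hpat0⟩ := hgood
      have hpat : ¬((σ j = 0 ∧ τ j = 1) ∨ (σ j = 1 ∧ τ j = 0)) := by tauto
      have hR : ∏ i, F i (σ i) (τ i) = 0 :=
        Finset.prod_eq_zero (Finset.mem_univ j)
          (by simp only [hF, if_neg hj, if_neg hpat])
      rw [hR]
      have hcases : σ j = 2 ∨ τ j = 2 ∨ σ j = τ j := by
        rcases fin3 (σ j) with h1 | h1 | h1 <;> rcases fin3 (τ j) with h2 | h2 | h2
        · exact Or.inr (Or.inr (h1.trans h2.symm))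
        · exact absurd (Or.inl ⟨h1, h2⟩) hpat
        · exact Or.inr (Or.inl h2)
        · exact absurd (Or.inr ⟨h1, h2⟩) hpat
        · exact Or.inr (Or.inr (h1.trans h2.symm))
        · exact Or.inr (Or.inl h2)
        · exact Or.inl h1
        · exact Or.inl h1
        · exact Or.inl h1
      rcases hcases with h | h | h
      · rw [show (∏ i, w i (σ i)) = 0 from Finset.prod_eq_zero (Finset.mem_univ j)
          (show w j (σ j) = 0 by simp [hw, hj, h]), zero_mul, zero_mul]
      · rw [show (∏ i, w i (τ i)) = 0 from Finset.prod_eq_zero (Finset.mem_univ j)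
          (show w j (τ j) = 0 by simp [hw, hj, h]), mul_zero, zero_mul]
      · have hz : g (fun i => (q i (σ i) - q i (τ i)) ^ 2) = 0 :=
          h0 _ (fun k => sq_nonneg _) ⟨j, by rw [h, sub_self]; norm_num⟩
        rw [hz, mul_zero]
  have hk := key_s10 hpdi w q hmass F hterm
  set A := g (Function.update t i0 ((x - y) ^ 2)) with hA
  set B := g (Function.update t i0 (x ^ 2)) with hB
  set C := g (Function.update t i0 (y ^ 2)) with hC
  have hFsum : ∀ i, (∑ s : Fin 3, ∑ s' : Fin 3, F i s s')
      = if i = i0 then 2 * (α * β * A - α * (α+β) * B - β * (α+β) * C) else -2 := by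
    intro i
    by_cases h : i = i0
    · subst h
      simp only [hF, if_pos rfl, Fin.sum_univ_three]
      have e1 : X 0 = x := by simp [hX]
      have e2 : X 1 = y := by simp [hX]
      have e3 : X 2 = 0 := by simp [hX]
      have w0 : w i 0 = α := by simp [hw]
      have w1 : w i 1 = β := by simp [hw]
      have w2 : w i 2 = -(α+β) := by simp [hw]
      rw [e1, e2, e3, w0, w1, w2]
      rw [sub_self, sub_self, sub_self]
      have eyx : ((y - x) ^ 2) = (x - y) ^ 2 := by ring
      have ex0 : ((x - 0) ^ 2) = x ^ 2 := by ring
      have e0x : ((0 - x) ^ 2) = x ^ 2 := by ring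
      have ey0 : ((y - 0) ^ 2) = y ^ 2 := by ring
      have e0y : ((0 - y) ^ 2) = y ^ 2 := by ring
      rw [eyx, ex0, e0x, ey0, e0y]
      norm_num [hdiag, ← hA, ← hB, ← hC]
      ring
    · simp only [hF, if_neg h, Fin.sum_univ_three]
      norm_num [Fin.ext_iff]
  rw [Finset.prod_congr rfl (fun i _ => hFsum i)] at hk
  rw [← Finset.mul_prod_erase Finset.univ _ (Finset.mem_univ i0), if_pos rfl,
    Finset.prod_congr rfl (fun j hj => if_neg (Finset.mem_erase.mp hj).1),
    Finset.prod_const, Finset.card_erase_of_mem (Finset.mem_univ i0),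
    Finset.card_univ, Fintype.card_fin, Nat.add_sub_cancel] at hk
  have h1 : ((-1 : ℝ)) ^ m * (-2) ^ m = 2 ^ m := by
    rw [← mul_pow]; norm_num
  have h2 : (0:ℝ) < 2 ^ m := pow_pos (by norm_num) m
  have he : (-1 : ℝ) ^ (m+1) *
      (2 * (α * β * A - α * (α+β) * B - β * (α+β) * C) * (-2) ^ m)
      = -(2 ^ (m+1)) * (α * β * A - α * (α+β) * B - β * (α+β) * C) := by
    rw [pow_succ, pow_succ]
    linear_combination (-2 * (α * β * A - α * (α+β) * B - β * (α+β) * C)) * h1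
  rw [he] at hk
  nlinarith [hk, pow_pos (show (0:ℝ) < 2 by norm_num) (m+1)]

lemma abc {A B C : ℝ} (hB : 0 ≤ B) (hC : 0 ≤ C)
    (h : ∀ α β : ℝ, α * β * A ≤ α * (α + β) * B + β * (α + β) * C) :
    Real.sqrt A ≤ Real.sqrt B + Real.sqrt C := by
  have key_s10 : A ≤ (Real.sqrt B + Real.sqrt C) ^ 2 := by
    rcases eq_or_lt_of_le hB with hB0 | hBpos
    · have hAC : A ≤ C := by
        by_contra hlt
        push_neg at hlt
        have hd : 0 < A - C := by linarith
        set α := (C + 1) / (A - C) with hα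
        have hαpos : 0 < α := div_pos (by linarith) hd
        have hαe : α * (A - C) = C + 1 := by
          rw [hα]; field_simp
        have h' := h α 1
        rw [← hB0] at h'
        nlinarith [h']
      rw [← hB0, Real.sqrt_zero, zero_add, Real.sq_sqrt hC]
      exact hAC
    · rcases eq_or_lt_of_le hC with hC0 | hCpos
      · have hAB : A ≤ B := by
          by_contra hlt
          push_neg at hlt
          have hd : 0 < A - B := by linarith
          set α := (B + 1) / (A - B) with hα
          have hαpos : 0 < α := div_pos (by linarith) hd
          have hαe : α * (A - B) = B + 1 := by
            rw [hα]; field_simp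
          have h' := h 1 α
          rw [← hC0] at h'
          nlinarith [h']
        rw [← hC0, Real.sqrt_zero, add_zero, Real.sq_sqrt hB]
        exact hAB
      · have hb := Real.sqrt_pos.mpr hBpos
        have hc := Real.sqrt_pos.mpr hCpos
        have h' := h (Real.sqrt C) (Real.sqrt B)
        have hB2 := Real.sq_sqrt hB
        have hC2 := Real.sq_sqrt hC
        have e : Real.sqrt C * (Real.sqrt C + Real.sqrt B) * B
            + Real.sqrt B * (Real.sqrt C + Real.sqrt B) * C
            = (Real.sqrt B * Real.sqrt C) * (Real.sqrt B + Real.sqrt C) ^ 2 := by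
          linear_combination (-(Real.sqrt C * (Real.sqrt C + Real.sqrt B))) * hB2
            + (-(Real.sqrt B * (Real.sqrt C + Real.sqrt B))) * hC2
        nlinarith [h', e, mul_pos hb hc]
  calc Real.sqrt A ≤ Real.sqrt ((Real.sqrt B + Real.sqrt C) ^ 2) :=
        Real.sqrt_le_sqrt key_s10
    _ = Real.sqrt B + Real.sqrt C := Real.sqrt_sq (by positivity)

lemma sqrt_step {n : ℕ} {g : (Fin n → ℝ) → ℝ}
    (h0 : ∀ t ∈ Qset n, (∃ i, t i = 0) → g t = 0) (hpdi : PDI n n g)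
    {z : Fin n → ℝ} {i0 : Fin n} (hz : ∀ j, j ≠ i0 → 0 < z j)
    {a b : ℝ} (ha : 0 ≤ a) (hb : 0 ≤ b) :
    |Real.sqrt (g (Function.update z i0 a)) - Real.sqrt (g (Function.update z i0 b))|
      ≤ Real.sqrt (g (Function.update z i0 ((Real.sqrt a - Real.sqrt b) ^ 2))) := by
  have hQmem : ∀ r : ℝ, 0 ≤ r → Function.update z i0 r ∈ Qset n := by
    intro r hr j
    rw [Function.update_apply]
    by_cases hj : j = i0
    · rw [if_pos hj]; exact hr
    · rw [if_neg hj]; exact (hz j hj).le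
  have M : ∀ x y : ℝ,
      Real.sqrt (g (Function.update z i0 ((x - y) ^ 2)))
        ≤ Real.sqrt (g (Function.update z i0 (x ^ 2)))
          + Real.sqrt (g (Function.update z i0 (y ^ 2))) := by
    intro x y
    exact abc (g_nonneg h0 hpdi _ (hQmem _ (sq_nonneg x)))
      (g_nonneg h0 hpdi _ (hQmem _ (sq_nonneg y)))
      (fun α β => family h0 hpdi i0 hz x y α β)
  rw [abs_sub_le_iff]
  constructor
  · have hM := M (Real.sqrt b) (Real.sqrt b - Real.sqrt a)
    have e1 : (Real.sqrt b - (Real.sqrt b - Real.sqrt a)) ^ 2 = a := by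
      rw [show Real.sqrt b - (Real.sqrt b - Real.sqrt a) = Real.sqrt a by ring,
        Real.sq_sqrt ha]
    have e2 : (Real.sqrt b) ^ 2 = b := Real.sq_sqrt hb
    have e3 : (Real.sqrt b - Real.sqrt a) ^ 2 = (Real.sqrt a - Real.sqrt b) ^ 2 := by ring
    rw [e1, e2, e3] at hM
    linarith
  · have hM := M (Real.sqrt a) (Real.sqrt a - Real.sqrt b)
    have e1 : (Real.sqrt a - (Real.sqrt a - Real.sqrt b)) ^ 2 = b := by
      rw [show Real.sqrt a - (Real.sqrt a - Real.sqrt b) = Real.sqrt b by ring,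
        Real.sq_sqrt hb]
    have e2 : (Real.sqrt a) ^ 2 = a := Real.sq_sqrt ha
    rw [e1, e2] at hM
    linarith

/-- for a `PDI_n^∞` function vanishing on `∂_{n−1}^n`, continuity on
`[0,∞)^n` is equivalent to continuity (towards the value `0`) at the points of
`∂_{n−1}^n`. -/
theorem statement10 {n : ℕ} (g : (Fin n → ℝ) → ℝ)
    (h0 : ∀ t ∈ Qset n, (∃ i, t i = 0) → g t = 0)
    (hpdi : PDI n n g) :
    ContinuousOn g (Qset n) ↔
      ∀ s ∈ Qset n, (∃ i, s i = 0) →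
        Filter.Tendsto g (nhdsWithin s (Qset n)) (nhds 0) := by
  constructor
  · intro hcont s hs hzero
    have h1 : Filter.Tendsto g (nhdsWithin s (Qset n)) (nhds (g s)) := hcont s hs
    rwa [h0 s hs hzero] at h1
  · intro hbd t ht
    by_cases hzero : ∃ i, t i = 0
    · have h1 := hbd t ht hzero
      show Filter.Tendsto g (nhdsWithin t (Qset n)) (nhds (g t))
      rwa [h0 t ht hzero]
    · push_neg at hzero
      have htpos : ∀ i, 0 < t i := fun i => (ht i).lt_of_ne (Ne.symm (hzero i))
      set L := nhdsWithin t (Qset n) with hL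
      set sg : (Fin n → ℝ) → ℝ := fun u => Real.sqrt (g u) with hsg
      set Z : (Fin n → ℝ) → ℕ → (Fin n → ℝ) :=
        fun s m i => if (i : ℕ) < m then s i else t i with hZ
      set T : (Fin n → ℝ) → Fin n → ℝ :=
        fun s j => sg (Function.update (Z s j.val) j
          ((Real.sqrt (s j) - Real.sqrt (t j)) ^ 2)) with hT
      have chain : ∀ s ∈ Qset n, (∀ i, 0 < s i) →
          |sg s - sg t| ≤ ∑ j : Fin n, T s j := by
        intro s hsQ hspos
        have main : ∀ m, m ≤ n →
            |sg (Z s m) - sg t|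
              ≤ ∑ j ∈ Finset.univ.filter (fun j : Fin n => j.val < m), T s j := by
          intro m
          induction m with
          | zero =>
            intro _
            have hz0 : Z s 0 = t := funext fun i => by simp [hZ]
            simp [hz0]
          | succ m ihm =>
            intro hm1
            have hm : m < n := hm1
            have ihm' := ihm (le_of_lt hm)
            set i0 : Fin n := ⟨m, hm⟩ with hi0
            have hz : ∀ j, j ≠ i0 → 0 < Z s m j := by
              intro j hj
              by_cases h : (j:ℕ) < m
              · simpa [hZ, h] using hspos j
              · simpa [hZ, h] using htpos j
            have hupd1 : Z s (m+1) = Function.update (Z s m) i0 (s i0) := by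
              funext i
              rw [Function.update_apply]
              by_cases h : i = i0
              · rw [if_pos h, h]; simp [hZ, hi0]
              · rw [if_neg h]
                have hiff : (i:ℕ) < m + 1 ↔ (i:ℕ) < m := by
                  constructor
                  · intro hlt
                    rcases Nat.lt_succ_iff_lt_or_eq.mp hlt with h' | h'
                    · exact h'
                    · exact absurd (Fin.ext h' : i = i0) h
                  · omega
                simp only [hZ, hiff]
            have hupd2 : Z s m = Function.update (Z s m) i0 (t i0) := by
              have he : Z s m i0 = t i0 := by simp [hZ, hi0]
              rw [← he, Function.update_eq_self]
            have step' := sqrt_step h0 hpdi hz (hsQ i0) (ht i0)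
            rw [← hupd2, ← hupd1] at step'
            have hset : Finset.univ.filter (fun j : Fin n => j.val < m+1)
                = insert i0 (Finset.univ.filter (fun j : Fin n => j.val < m)) := by
              ext j
              simp only [Finset.mem_filter, Finset.mem_insert, Finset.mem_univ, true_and,
                hi0, Fin.ext_iff]
              omega
            have hnotmem : i0 ∉ Finset.univ.filter (fun j : Fin n => j.val < m) := by
              simp [Finset.mem_filter, hi0]
            rw [hset, Finset.sum_insert hnotmem]
            have htri : |sg (Z s (m+1)) - sg t|
                ≤ |sg (Z s (m+1)) - sg (Z s m)| + |sg (Z s m) - sg t| := abs_sub_le _ _ _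
            have hTs : T s i0 = Real.sqrt (g (Function.update (Z s m) i0
                ((Real.sqrt (s i0) - Real.sqrt (t i0)) ^ 2))) := rfl
            rw [hTs]
            calc |sg (Z s (m+1)) - sg t|
                ≤ |sg (Z s (m+1)) - sg (Z s m)| + |sg (Z s m) - sg t| := htri
              _ ≤ _ := add_le_add step' ihm'
        have hZn : Z s n = s := funext fun i => by simp [hZ, i.isLt]
        have hfil : Finset.univ.filter (fun j : Fin n => j.val < n) = Finset.univ := by
          ext j; simp [j.isLt]
        have hmain := main n le_rfl
        rwa [hZn, hfil] at hmain
      have hTj : ∀ j : Fin n, Filter.Tendsto (fun s => T s j) L (nhds 0) := by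
        intro j
        set bp : Fin n → ℝ := Function.update t j 0 with hbp
        have hbpQ : bp ∈ Qset n := by
          intro i
          rw [hbp, Function.update_apply]
          by_cases h : i = j
          · rw [if_pos h]
          · rw [if_neg h]; exact ht i
        have hbp0 : ∃ i, bp i = 0 := ⟨j, by simp [hbp]⟩
        have h3 : Filter.Tendsto g (nhdsWithin bp (Qset n)) (nhds 0) := hbd bp hbpQ hbp0
        set U : (Fin n → ℝ) → (Fin n → ℝ) := fun s => Function.update (Z s j.val) j
          ((Real.sqrt (s j) - Real.sqrt (t j)) ^ 2) with hU
        have h1 : Filter.Tendsto U L (nhds bp) := by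
          rw [tendsto_pi_nhds]
          intro i
          by_cases h : i = j
          · subst h
            have hU1 : ∀ s, U s i = (Real.sqrt (s i) - Real.sqrt (t i)) ^ 2 := fun s => by
              simp [hU]
            have hbpi : bp i = 0 := by simp [hbp]
            simp only [hU1, hbpi]
            have hcoord : Filter.Tendsto (fun s : Fin n → ℝ => s i) L (nhds (t i)) :=
              ((continuous_apply i).tendsto t).mono_left nhdsWithin_le_nhds
            have h4 := (((Real.continuous_sqrt.tendsto (t i)).comp hcoord).sub
              (tendsto_const_nhds (x := Real.sqrt (t i)))).pow 2
            simpa using h4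
          · have hbpi : bp i = t i := by simp [hbp, h]
            have hU1 : ∀ s, U s i = if (i:ℕ) < (j:ℕ) then s i else t i := fun s => by
              simp [hU, Function.update_apply, h, hZ]
            simp only [hU1, hbpi]
            by_cases h2 : (i:ℕ) < (j:ℕ)
            · simp only [if_pos h2]
              exact ((continuous_apply i).tendsto t).mono_left nhdsWithin_le_nhds
            · simp only [if_neg h2]
              exact tendsto_const_nhds
        have h2 : ∀ᶠ s in L, U s ∈ Qset n := by
          filter_upwards [self_mem_nhdsWithin] with s hs
          intro i
          simp only [hU]
          rw [Function.update_apply]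
          by_cases h : i = j
          · rw [if_pos h]; positivity
          · rw [if_neg h]
            show (0:ℝ) ≤ if (i:ℕ) < (j:ℕ) then s i else t i
            by_cases h2 : (i:ℕ) < (j:ℕ)
            · rw [if_pos h2]; exact hs i
            · rw [if_neg h2]; exact ht i
        have hcomp : Filter.Tendsto (fun s => g (U s)) L (nhds 0) :=
          h3.comp ((tendsto_nhdsWithin_iff).mpr ⟨h1, h2⟩)
        have h5 : Filter.Tendsto (fun s => Real.sqrt (g (U s))) L (nhds 0) := by
          have h6 := (Real.continuous_sqrt.tendsto 0).comp hcomp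
          rw [Real.sqrt_zero] at h6
          exact h6
        exact h5
      have hSsum : Filter.Tendsto (fun s => ∑ j : Fin n, T s j) L (nhds 0) := by
        have h7 := tendsto_finset_sum Finset.univ (fun (j : Fin n) _ => hTj j)
        simpa using h7
      have hEvpos : ∀ᶠ s in L, ∀ i, 0 < s i := by
        have hopen : IsOpen {s : Fin n → ℝ | ∀ i, 0 < s i} := by
          have he : {s : Fin n → ℝ | ∀ i, 0 < s i}
              = ⋂ i, (fun s : Fin n → ℝ => s i) ⁻¹' Set.Ioi 0 := by
            ext u; simp [Set.mem_iInter, Set.mem_Ioi]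
          rw [he]
          exact isOpen_iInter_of_finite fun i =>
            (continuous_apply i).isOpen_preimage _ isOpen_Ioi
        exact nhdsWithin_le_nhds (hopen.mem_nhds htpos)
      have hEvQ : ∀ᶠ s in L, s ∈ Qset n := self_mem_nhdsWithin
      have hbound : ∀ᶠ s in L, |sg s - sg t| ≤ ∑ j : Fin n, T s j := by
        filter_upwards [hEvpos, hEvQ] with s h1 h2
        exact chain s h2 h1
      have habs : Filter.Tendsto (fun s => |sg s - sg t|) L (nhds 0) :=
        squeeze_zero' (Filter.Eventually.of_forall fun s => abs_nonneg _) hbound hSsum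
      have hsgt : Filter.Tendsto sg L (nhds (sg t)) := by
        rw [tendsto_iff_dist_tendsto_zero]
        simpa [Real.dist_eq] using habs
      have hg2 : Filter.Tendsto (fun s => (sg s) ^ 2) L (nhds ((sg t) ^ 2)) := hsgt.pow 2
      have hEq : ∀ᶠ s in L, (sg s) ^ 2 = g s := by
        filter_upwards [hEvQ] with s hs
        exact Real.sq_sqrt (g_nonneg h0 hpdi s hs)
      have hfin : Filter.Tendsto g L (nhds ((sg t) ^ 2)) := hg2.congr' hEq
      show Filter.Tendsto g L (nhds (g t))
      rwa [show (sg t) ^ 2 = g t from Real.sq_sqrt (g_nonneg h0 hpdi t ht)] at hfin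

end IndepRBF
end
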